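/- arXiv:1310.4892 — 6 statements merged into one kernel-verified Lean document; each statement's English description precedes it below -/
import Mathlib

section
/- Let α > 1 and let (x_n)_{n<ω} be a sequence in (0,1) with x_{n+1} = x_n^α for every n. Suppose φ : [0,1] → [0,∞) is essentially increasing on [0,1] with φ(x_0) > 0, and there is λ > 0 such that φ(x_{n+1}) ≥ λ·φ(x_n) for every n. Then (φ(x))_{x∈[0,1]} ≈ (φ(x^α))_{x∈[0,1]}. -/
/-!
Write `C` for the constant of essential monotonicity. Since `t ^ α ≤ t` on `[0, 1]`, one always
has `φ (t ^ α) ≤ C φ t`. For the converse, the iterates `x n = x 0 ^ α ^ n` decrease to `0`, so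
every `t ∈ (0, x 0]` lies in some bracket `[x (n+1), x n]`; then `t ^ α ≥ x (n+2)` and two steps
of the `λ`-condition give `λ² φ t ≤ C² φ (t ^ α)`. On `[x 0, 1]` the function `φ` is at most
`C φ 1`, while `φ (t ^ α) ≥ φ (x 1) / C ≥ λ φ (x 0) / C > 0`.
-/

open Set Filter Topology

/-- `f` is essentially increasing on `D`: for some `C ≥ 1`,
`x ≤ y` implies `f x ≤ C * f y` for `x, y ∈ D`. -/
def EssIncOn (f : ℝ → ℝ) (D : Set ℝ) : Prop :=
  ∃ C : ℝ, 1 ≤ C ∧ ∀ x ∈ D, ∀ y ∈ D, x ≤ y → f x ≤ C * f y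

/-- `(f x)_{x ∈ D} ≈ (g x)_{x ∈ D}`: for some `C ≥ 1`,
`g x / C ≤ f x ≤ C * g x` for all `x ∈ D`. -/
def EquivOn (f g : ℝ → ℝ) (D : Set ℝ) : Prop :=
  ∃ C : ℝ, 1 ≤ C ∧ ∀ x ∈ D, g x / C ≤ f x ∧ f x ≤ C * g x

/-- `(u n) ≈ (v n)`: for some `C ≥ 1`, `v n / C ≤ u n ≤ C * v n` for all `n`. -/
def SeqEquiv (u v : ℕ → ℝ) : Prop :=
  ∃ C : ℝ, 1 ≤ C ∧ ∀ n, v n / C ≤ u n ∧ u n ≤ C * v n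

theorem equivOn_of_le_mul {f g : ℝ → ℝ} {D : Set ℝ} (hf : ∀ x ∈ D, 0 ≤ f x)
    (hg : ∀ x ∈ D, 0 ≤ g x) {K₁ K₂ : ℝ} (h₁ : ∀ x ∈ D, f x ≤ K₁ * g x)
    (h₂ : ∀ x ∈ D, g x ≤ K₂ * f x) : EquivOn f g D := by
  refine ⟨max 1 (max K₁ K₂), le_max_left _ _, fun x hx => ⟨?_, ?_⟩⟩
  · rw [div_le_iff₀ (by positivity), mul_comm]
    exact (h₂ x hx).trans
      (mul_le_mul_of_nonneg_right (le_max_of_le_right (le_max_right _ _)) (hf x hx))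
  · exact (h₁ x hx).trans
      (mul_le_mul_of_nonneg_right (le_max_of_le_right (le_max_left _ _)) (hg x hx))

theorem exists_succ_le_and_le_of_tendsto {β : Type*} [LinearOrder β] [TopologicalSpace β]
    [ClosedIciTopology β] {x : ℕ → β} {a t : β} (hx : Tendsto x atTop (𝓝 a)) (hat : a < t)
    (ht : t ≤ x 0) : ∃ n, x (n + 1) ≤ t ∧ t ≤ x n := by
  by_contra! h
  have hle : ∀ n, t ≤ x n := by
    intro n
    induction n with
    | zero => exact ht
    | succ n ih => exact not_lt.mp fun hlt => (h n hlt.le).not_ge ih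
  exact (ge_of_tendsto' hx hle).not_gt hat

theorem tendsto_zero_of_succ_eq_rpow {α : ℝ} (hα : 1 < α) {x : ℕ → ℝ} (hx₀ : 0 ≤ x 0)
    (hx₁ : x 0 < 1) (hrec : ∀ n, x (n + 1) = x n ^ α) : Tendsto x atTop (𝓝 0) := by
  have hform : x = fun n => x 0 ^ (α ^ n) := by
    funext n
    induction n with
    | zero => simp
    | succ n ih => rw [hrec n, ih, ← Real.rpow_mul hx₀, ← pow_succ]
  rw [hform]
  exact (tendsto_rpow_atTop_of_base_lt_one _ (by linarith) hx₁).comp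
    (tendsto_pow_atTop_atTop_of_one_lt hα)

theorem rpow_mem_Icc_zero_one {t : ℝ} (ht : t ∈ Icc (0 : ℝ) 1) {α : ℝ} (hα : 0 ≤ α) :
    t ^ α ∈ Icc (0 : ℝ) 1 :=
  ⟨Real.rpow_nonneg ht.1 α, Real.rpow_le_one ht.1 ht.2 hα⟩

section

variable {φ : ℝ → ℝ} {C α : ℝ}
  (hC : ∀ s ∈ Icc (0 : ℝ) 1, ∀ t ∈ Icc (0 : ℝ) 1, s ≤ t → φ s ≤ C * φ t)
include hC

theorem apply_rpow_le_mul (hα : 1 ≤ α) {t : ℝ} (ht : t ∈ Icc (0 : ℝ) 1) :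
    φ (t ^ α) ≤ C * φ t :=
  hC _ (rpow_mem_Icc_zero_one ht (by linarith)) t ht (Real.rpow_le_self_of_le_one ht.1 ht.2 hα)

variable (hα : 0 ≤ α) {x : ℕ → ℝ} (hx : ∀ n, x n ∈ Icc (0 : ℝ) 1)
  (hrec : ∀ n, x (n + 1) = x n ^ α)
include hα hx hrec

theorem apply_le_mul_of_succ_le_rpow {t : ℝ} (ht : t ∈ Icc (0 : ℝ) 1) {n : ℕ}
    (hxt : x n ≤ t) : φ (x (n + 1)) ≤ C * φ (t ^ α) := by
  refine hC _ (hx _) _ (rpow_mem_Icc_zero_one ht hα) ?_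
  rw [hrec n]
  exact Real.rpow_le_rpow (hx n).1 hxt hα

theorem sq_mul_le_mul_apply_rpow {lam : ℝ} (hlam₀ : 0 ≤ lam)
    (hlam : ∀ n, lam * φ (x n) ≤ φ (x (n + 1))) (hC₀ : 0 ≤ C) {t : ℝ}
    (ht : t ∈ Icc (0 : ℝ) 1) {n : ℕ} (hnt : x (n + 1) ≤ t) (htn : t ≤ x n) :
    lam ^ 2 * φ t ≤ C ^ 2 * φ (t ^ α) := by
  have hφt : φ t ≤ C * φ (x n) := hC t ht _ (hx n) htn
  have htwo : lam ^ 2 * φ (x n) ≤ φ (x (n + 2)) :=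
    calc lam ^ 2 * φ (x n) = lam * (lam * φ (x n)) := by ring
      _ ≤ lam * φ (x (n + 1)) := mul_le_mul_of_nonneg_left (hlam n) hlam₀
      _ ≤ φ (x (n + 2)) := hlam (n + 1)
  calc lam ^ 2 * φ t ≤ lam ^ 2 * (C * φ (x n)) := by gcongr
    _ = C * (lam ^ 2 * φ (x n)) := by ring
    _ ≤ C * (C * φ (t ^ α)) := mul_le_mul_of_nonneg_left
      (htwo.trans (apply_le_mul_of_succ_le_rpow hC hα hx hrec ht hnt)) hC₀
    _ = C ^ 2 * φ (t ^ α) := by ring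

theorem mul_apply_le_mul_apply_rpow_of_le {lam : ℝ} (hlam₀ : 0 ≤ lam)
    (hlam : lam * φ (x 0) ≤ φ (x 1)) (hφx₀ : 0 ≤ φ (x 0)) (hφ₁ : 0 ≤ φ 1) (hC₀ : 0 ≤ C)
    {t : ℝ} (ht : t ∈ Icc (0 : ℝ) 1) (hxt : x 0 ≤ t) :
    lam * φ (x 0) * φ t ≤ C ^ 2 * φ 1 * φ (t ^ α) := by
  have hφt : φ t ≤ C * φ 1 := hC t ht 1 (right_mem_Icc.mpr zero_le_one) ht.2
  have hφtα : lam * φ (x 0) ≤ C * φ (t ^ α) :=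
    hlam.trans (apply_le_mul_of_succ_le_rpow hC hα hx hrec ht hxt)
  calc lam * φ (x 0) * φ t = φ t * (lam * φ (x 0)) := by ring
    _ ≤ C * φ 1 * (C * φ (t ^ α)) :=
      mul_le_mul hφt hφtα (by positivity) (mul_nonneg hC₀ hφ₁)
    _ = C ^ 2 * φ 1 * φ (t ^ α) := by ring

end

theorem exists_apply_le_mul_apply_rpow {φ : ℝ → ℝ} {C α lam : ℝ} {x : ℕ → ℝ} (hα : 1 < α)
    (hx : ∀ n, x n ∈ Icc (0 : ℝ) 1) (hx₀ : x 0 < 1) (hrec : ∀ n, x (n + 1) = x n ^ α)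
    (hφ : ∀ t ∈ Icc (0 : ℝ) 1, 0 ≤ φ t) (hφx₀ : 0 < φ (x 0)) (hC₁ : 1 ≤ C)
    (hC : ∀ s ∈ Icc (0 : ℝ) 1, ∀ t ∈ Icc (0 : ℝ) 1, s ≤ t → φ s ≤ C * φ t)
    (hlam₀ : 0 < lam) (hlam : ∀ n, lam * φ (x n) ≤ φ (x (n + 1))) :
    ∃ K, ∀ t ∈ Icc (0 : ℝ) 1, φ t ≤ K * φ (t ^ α) := by
  have hC₀ : 0 ≤ C := by linarith
  have hx_tendsto := tendsto_zero_of_succ_eq_rpow hα (hx 0).1 hx₀ hrec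
  refine ⟨max C (max (C ^ 2 / lam ^ 2) (C ^ 2 * φ 1 / (lam * φ (x 0)))), fun t ht => ?_⟩
  have hφtα : 0 ≤ φ (t ^ α) := hφ _ (rpow_mem_Icc_zero_one ht (by linarith))
  suffices φ t ≤ C * φ (t ^ α) ∨ φ t ≤ C ^ 2 / lam ^ 2 * φ (t ^ α) ∨
      φ t ≤ C ^ 2 * φ 1 / (lam * φ (x 0)) * φ (t ^ α) by
    rcases this with h | h | h <;> refine h.trans (mul_le_mul_of_nonneg_right ?_ hφtα)
    · exact le_max_left _ _
    · exact le_max_of_le_right (le_max_left _ _)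
    · exact le_max_of_le_right (le_max_right _ _)
  rcases ht.1.eq_or_lt with rfl | ht₀
  · left
    rw [Real.zero_rpow (by linarith)]
    exact hC 0 ht 0 ht le_rfl
  rcases le_or_gt t (x 0) with htx | hxt
  · right; left
    obtain ⟨n, hnt, htn⟩ := exists_succ_le_and_le_of_tendsto hx_tendsto ht₀ htx
    rw [div_mul_eq_mul_div, le_div_iff₀ (by positivity), mul_comm]
    exact sq_mul_le_mul_apply_rpow hC (by linarith) hx hrec hlam₀.le hlam hC₀ ht hnt htn
  · right; right
    rw [div_mul_eq_mul_div, le_div_iff₀ (by positivity), mul_comm]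
    exact mul_apply_le_mul_apply_rpow_of_le hC (by linarith) hx hrec hlam₀.le (hlam 0) hφx₀.le
      (hφ 1 (right_mem_Icc.mpr zero_le_one)) hC₀ ht hxt.le

theorem stmt1 (α : ℝ) (hα : 1 < α) (x : ℕ → ℝ)
    (hx : ∀ n, x n ∈ Ioo (0:ℝ) 1)
    (hrec : ∀ n, x (n+1) = x n ^ α)
    (φ : ℝ → ℝ) (hφnn : ∀ t ∈ Icc (0:ℝ) 1, 0 ≤ φ t)
    (hφei : EssIncOn φ (Icc 0 1))
    (hφ0 : 0 < φ (x 0))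
    (hlam : ∃ lam > (0:ℝ), ∀ n, lam * φ (x n) ≤ φ (x (n+1))) :
    EquivOn φ (fun t => φ (t ^ α)) (Icc 0 1) := by
  obtain ⟨C, hC₁, hC⟩ := hφei
  obtain ⟨lam, hlam₀, hlam⟩ := hlam
  have hxI : ∀ n, x n ∈ Icc (0 : ℝ) 1 := fun n => Ioo_subset_Icc_self (hx n)
  obtain ⟨K, hK⟩ := exists_apply_le_mul_apply_rpow hα hxI (hx 0).2 hrec hφnn hφ0 hC₁ hC
    hlam₀ hlam
  exact equivOn_of_le_mul hφnn (fun t ht => hφnn _ (rpow_mem_Icc_zero_one ht (by linarith))) hK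
    (fun t ht => apply_rpow_le_mul hC hα.le ht)
end

section
/- Let α ≥ 1 and let φ : [0,1] → [0,∞) be essentially increasing on [0,1] with φ(1/2) > 0, and suppose there is δ > 0 such that φ(1/2^{2n}) ≥ δ·φ(1/2^n) for every n < ω. Set f(x) = x^α·φ(x) for x ∈ [0,1]. Then E_f is an equivalence relation on [0,1]^ω, and moreover there exist ε > 0 and M < ω such that for every n > M and all x, y ∈ [0,1]: if φ(x) ≤ ε·φ(y)·φ(1/2^n), then x ≤ y/2^{n+1}. -/
open Set

/-- The relation `E_f` on `[0,1]^ω`: `(x_n) E_f (y_n)` iff `Σ f(|x_n − y_n|) < ∞`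
(for `f ≥ 0` this is equivalent to summability). -/
def EF (f : ℝ → ℝ) (x y : ℕ → Icc (0:ℝ) 1) : Prop :=
  Summable fun n => f |(x n : ℝ) - (y n : ℝ)|

/-- Borel reducibility of binary relations. -/
def BorelReducible {X Y : Type*} [MeasurableSpace X] [MeasurableSpace Y]
    (E : X → X → Prop) (F : Y → Y → Prop) : Prop :=
  ∃ θ : X → Y, Measurable θ ∧ ∀ x y, E x y ↔ F (θ x) (θ y)

/-- The relation `ℝ^ω/ℓ_p`: `x E y` iff `Σ |x_n − y_n|^p < ∞`. -/
def lpRel (p : ℝ) (x y : ℕ → ℝ) : Prop :=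
  Summable fun n => |x n - y n| ^ p

/-!
Everything is read off the dyadic sequence `u k = φ (2⁻ᵏ)`, which is essentially antitone and
satisfies `δ u k ≤ u (2k)`. Together with `u 1 > 0` this gives a uniform one-step bound
`c u k ≤ u (k+1)`, hence `u q ≳ u k` whenever `q ≤ 2k + 2`. Consequently `φ` is doubling
(`φ s ≲ φ t` for `s ≤ 2t`), which makes `x ↦ x^α φ x` quasi-subadditive, so `E_f` is transitive;
and `u m u n ≲ u (m + n + 2)`, which, after bracketing `y` and `x` between dyadic points, gives
`φ y φ(2⁻ⁿ) ≲ φ x` whenever `x > y / 2ⁿ⁺¹`.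
-/

section DyadicSequence

variable {u : ℕ → ℝ} {C δ c : ℝ}

lemma exists_pos_mul_le_succ (hu : ∀ k, 0 ≤ u k) (hC0 : 0 < C)
    (hC : ∀ j k, j ≤ k → u k ≤ C * u j) (hδ : ∀ k, δ * u k ≤ u (2 * k)) (hδ0 : 0 < δ)
    (hu0 : 0 < u 0) (hu1 : 0 < u 1) : ∃ c > 0, ∀ k, c * u k ≤ u (k + 1) := by
  refine ⟨min (u 1 / u 0) (δ / C), by positivity, ?_⟩
  rintro (_ | k)
  · calc min (u 1 / u 0) (δ / C) * u 0 ≤ u 1 / u 0 * u 0 :=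
          mul_le_mul_of_nonneg_right (min_le_left _ _) (hu 0)
      _ = u 1 := div_mul_cancel₀ _ hu0.ne'
  · have hstep : δ * u (k + 1) ≤ C * u (k + 2) := (hδ (k + 1)).trans (hC _ _ (by omega))
    calc min (u 1 / u 0) (δ / C) * u (k + 1) ≤ δ / C * u (k + 1) :=
          mul_le_mul_of_nonneg_right (min_le_right _ _) (hu _)
      _ ≤ u (k + 2) := by rw [div_mul_eq_mul_div, div_le_iff₀ hC0]; linarith

lemma pos_of_mul_le_succ (hc : 0 < c) (hsucc : ∀ k, c * u k ≤ u (k + 1)) (hu0 : 0 < u 0) :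
    ∀ k, 0 < u k
  | 0 => hu0
  | k + 1 => (mul_pos hc (pos_of_mul_le_succ hc hsucc hu0 k)).trans_le (hsucc k)

lemma mul_sq_mul_le_of_le_two_mul_add_two (hC : ∀ j k, j ≤ k → u k ≤ C * u j)
    (hδ : ∀ k, δ * u k ≤ u (2 * k)) (hc : 0 ≤ c) (hsucc : ∀ k, c * u k ≤ u (k + 1))
    {k q : ℕ} (hq : q ≤ 2 * k + 2) : δ * c ^ 2 * u k ≤ C * u q :=
  calc δ * c ^ 2 * u k = c * (c * (δ * u k)) := by ring
    _ ≤ c * (c * u (2 * k)) := by gcongr; exact hδ k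
    _ ≤ c * u (2 * k + 1) := by gcongr; exact hsucc _
    _ ≤ u (2 * k + 2) := hsucc _
    _ ≤ C * u q := hC _ _ hq

lemma exists_pos_mul_mul_le (hu : ∀ k, 0 ≤ u k) (hC0 : 0 < C)
    (hC : ∀ j k, j ≤ k → u k ≤ C * u j) {a : ℝ} (ha : 0 < a)
    (hlow : ∀ k q, q ≤ 2 * k + 2 → a * u k ≤ C * u q) (hu0 : 0 < u 0) :
    ∃ b > 0, ∀ m n, b * (u m * u n) ≤ u (m + n + 2) := by
  refine ⟨a / (C * u 0 * C), by positivity, fun m n => ?_⟩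
  wlog hmn : m ≤ n generalizing m n
  · rw [mul_comm (u m), add_comm m]; exact this n m (by omega)
  rw [div_mul_eq_mul_div, div_le_iff₀ (by positivity)]
  calc a * (u m * u n) = u m * (a * u n) := by ring
    _ ≤ u m * (C * u (m + n + 2)) :=
        mul_le_mul_of_nonneg_left (hlow n (m + n + 2) (by omega)) (hu m)
    _ ≤ C * u 0 * (C * u (m + n + 2)) := by
        gcongr
        · exact mul_nonneg hC0.le (hu _)
        · exact hC 0 m (Nat.zero_le m)
    _ = u (m + n + 2) * (C * u 0 * C) := by ring

end DyadicSequence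

lemma half_pow_mem_Icc (k : ℕ) : (1 / 2 : ℝ) ^ k ∈ Icc (0 : ℝ) 1 :=
  ⟨by positivity, pow_le_one₀ (by norm_num) (by norm_num)⟩

lemma abs_sub_mem_Icc {x y : ℝ} (hx : x ∈ Icc (0 : ℝ) 1) (hy : y ∈ Icc (0 : ℝ) 1) :
    |x - y| ∈ Icc (0 : ℝ) 1 :=
  ⟨abs_nonneg _, by simpa using abs_sub_le_of_le_of_le hx.1 hx.2 hy.1 hy.2⟩

lemma exists_le_half_pow_and_half_pow_le (n : ℕ) {x y : ℝ} (hx : 0 < x)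
    (hy : y ∈ Icc (0 : ℝ) 1) (hxy : y / 2 ^ (n + 1) ≤ x) :
    ∃ m : ℕ, y ≤ (1 / 2 : ℝ) ^ m ∧ (1 / 2 : ℝ) ^ (m + n + 2) ≤ x := by
  rcases hy.1.eq_or_lt with rfl | hy0
  · obtain ⟨m, hm⟩ := exists_pow_lt_of_lt_one hx (by norm_num : (1 / 2 : ℝ) < 1)
    exact ⟨m, by positivity,
      (pow_le_pow_of_le_one (by norm_num) (by norm_num) (by omega)).trans hm.le⟩
  · obtain ⟨m, hm, hym⟩ := exists_nat_pow_near_of_lt_one hy0 hy.2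
      (by norm_num : (0 : ℝ) < 1 / 2) (by norm_num)
    refine ⟨m, hym, le_trans ?_ hxy⟩
    calc (1 / 2 : ℝ) ^ (m + n + 2) = (1 / 2) ^ (m + 1) / 2 ^ (n + 1) := by
          rw [show m + n + 2 = (m + 1) + (n + 1) by omega, pow_add, div_pow _ 2 (n + 1)]
          ring
      _ ≤ y / 2 ^ (n + 1) := by gcongr

section EssentiallyIncreasing

variable {φ : ℝ → ℝ} {C : ℝ}

lemma le_mul_half_pow_of_le (hφ : ∀ x ∈ Icc (0 : ℝ) 1, ∀ y ∈ Icc (0 : ℝ) 1, x ≤ y → φ x ≤ C * φ y)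
    {j k : ℕ} (h : j ≤ k) : φ ((1 / 2 : ℝ) ^ k) ≤ C * φ ((1 / 2 : ℝ) ^ j) :=
  hφ _ (half_pow_mem_Icc k) _ (half_pow_mem_Icc j)
    (pow_le_pow_of_le_one (by norm_num) (by norm_num) h)

lemma pos_of_half_pow_pos
    (hφ : ∀ x ∈ Icc (0 : ℝ) 1, ∀ y ∈ Icc (0 : ℝ) 1, x ≤ y → φ x ≤ C * φ y) (hC0 : 0 ≤ C)
    (hpos : ∀ k, 0 < φ ((1 / 2 : ℝ) ^ k)) : ∀ x ∈ Ioc (0 : ℝ) 1, 0 < φ x := by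
  intro x hx
  obtain ⟨m, hm⟩ := exists_pow_lt_of_lt_one hx.1 (by norm_num : (1 / 2 : ℝ) < 1)
  exact pos_of_mul_pos_right
    ((hpos m).trans_le (hφ _ (half_pow_mem_Icc m) x (Ioc_subset_Icc_self hx) hm.le)) hC0

lemma exists_le_mul_of_le_two_mul (hφnn : ∀ t ∈ Icc (0 : ℝ) 1, 0 ≤ φ t)
    (hφ : ∀ x ∈ Icc (0 : ℝ) 1, ∀ y ∈ Icc (0 : ℝ) 1, x ≤ y → φ x ≤ C * φ y) (hC0 : 0 < C)
    {a : ℝ} (ha : 0 < a)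
    (hlow : ∀ k q : ℕ, q ≤ 2 * k + 2 → a * φ ((1 / 2 : ℝ) ^ k) ≤ C * φ ((1 / 2 : ℝ) ^ q)) :
    ∃ K ≥ 0, ∀ s ∈ Icc (0 : ℝ) 1, ∀ t ∈ Icc (0 : ℝ) 1, s ≤ 2 * t → φ s ≤ K * φ t := by
  refine ⟨max C (C ^ 3 / a), hC0.le.trans (le_max_left _ _), fun s hs t ht hst => ?_⟩
  rcases ht.1.eq_or_lt with rfl | ht0
  · calc φ s ≤ C * φ 0 := hφ s hs 0 ht (by linarith)
      _ ≤ _ := by gcongr; exacts [hφnn 0 ht, le_max_left _ _]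
  obtain ⟨m, hsm, hmt⟩ := exists_le_half_pow_and_half_pow_le 0 ht0 hs (by linarith)
  have hchain : a * φ s ≤ C ^ 3 * φ t :=
    calc a * φ s ≤ a * (C * φ ((1 / 2 : ℝ) ^ m)) := by
          gcongr; exact hφ s hs _ (half_pow_mem_Icc m) hsm
      _ = C * (a * φ ((1 / 2 : ℝ) ^ m)) := by ring
      _ ≤ C * (C * φ ((1 / 2 : ℝ) ^ (m + 0 + 2))) :=
          mul_le_mul_of_nonneg_left (hlow m (m + 0 + 2) (by omega)) hC0.le
      _ ≤ C * (C * (C * φ t)) := by gcongr; exact hφ _ (half_pow_mem_Icc _) t ht hmt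
      _ = C ^ 3 * φ t := by ring
  calc φ s ≤ C ^ 3 / a * φ t := by rw [div_mul_eq_mul_div, le_div_iff₀ ha]; linarith
    _ ≤ _ := by gcongr; exacts [hφnn t ht, le_max_right _ _]

lemma exists_pos_forall_le_div_two_pow
    (hφnn : ∀ t ∈ Icc (0 : ℝ) 1, 0 ≤ φ t)
    (hφ : ∀ x ∈ Icc (0 : ℝ) 1, ∀ y ∈ Icc (0 : ℝ) 1, x ≤ y → φ x ≤ C * φ y) (hC0 : 0 < C)
    (hpos : ∀ x ∈ Ioc (0 : ℝ) 1, 0 < φ x) {b : ℝ} (hb : 0 < b)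
    (hprod : ∀ m n : ℕ, b * (φ ((1 / 2 : ℝ) ^ m) * φ ((1 / 2 : ℝ) ^ n)) ≤
      φ ((1 / 2 : ℝ) ^ (m + n + 2))) :
    ∃ ε > (0 : ℝ), ∀ n : ℕ, ∀ x ∈ Icc (0 : ℝ) 1, ∀ y ∈ Icc (0 : ℝ) 1,
      φ x ≤ ε * φ y * φ ((1 / 2 : ℝ) ^ n) → x ≤ y / 2 ^ (n + 1) := by
  refine ⟨b / (2 * C ^ 2), by positivity, fun n x hx y hy hle => ?_⟩
  by_contra! hlt
  have hx0 : 0 < x := (div_nonneg hy.1 (by positivity)).trans_lt hlt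
  obtain ⟨m, hym, hmx⟩ := exists_le_half_pow_and_half_pow_le n hx0 hy hlt.le
  have hφn := hφnn _ (half_pow_mem_Icc n)
  have hbound : b * (φ y * φ ((1 / 2 : ℝ) ^ n)) ≤ C ^ 2 * φ x :=
    calc b * (φ y * φ ((1 / 2 : ℝ) ^ n))
        ≤ b * (C * φ ((1 / 2 : ℝ) ^ m) * φ ((1 / 2 : ℝ) ^ n)) := by
          gcongr; exact hφ y hy _ (half_pow_mem_Icc m) hym
      _ = C * (b * (φ ((1 / 2 : ℝ) ^ m) * φ ((1 / 2 : ℝ) ^ n))) := by ring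
      _ ≤ C * (C * φ x) := mul_le_mul_of_nonneg_left
          ((hprod m n).trans (hφ _ (half_pow_mem_Icc _) x hx hmx)) hC0.le
      _ = C ^ 2 * φ x := by ring
  have hhalf : φ x ≤ φ x / 2 := by
    calc φ x ≤ b / (2 * C ^ 2) * φ y * φ ((1 / 2 : ℝ) ^ n) := hle
      _ = b * (φ y * φ ((1 / 2 : ℝ) ^ n)) / (2 * C ^ 2) := by ring
      _ ≤ C ^ 2 * φ x / (2 * C ^ 2) := by gcongr
      _ = φ x / 2 := by field_simp
  linarith [hpos x ⟨hx0, hx.2⟩]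

end EssentiallyIncreasing

lemma rpow_mul_le_of_le_add {φ : ℝ → ℝ} {α K : ℝ} (hα : 0 ≤ α)
    (hφnn : ∀ t ∈ Icc (0 : ℝ) 1, 0 ≤ φ t) (hK0 : 0 ≤ K)
    (hK : ∀ s ∈ Icc (0 : ℝ) 1, ∀ t ∈ Icc (0 : ℝ) 1, s ≤ 2 * t → φ s ≤ K * φ t)
    {s a b : ℝ} (hs : s ∈ Icc (0 : ℝ) 1) (ha : a ∈ Icc (0 : ℝ) 1) (hb : b ∈ Icc (0 : ℝ) 1)
    (hsab : s ≤ a + b) :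
    s ^ α * φ s ≤ 2 ^ α * K * (a ^ α * φ a + b ^ α * φ b) := by
  have hfa : 0 ≤ a ^ α * φ a := mul_nonneg (Real.rpow_nonneg ha.1 α) (hφnn a ha)
  have hfb : 0 ≤ b ^ α * φ b := mul_nonneg (Real.rpow_nonneg hb.1 α) (hφnn b hb)
  set t := max a b
  have ht : t ∈ Icc (0 : ℝ) 1 := ⟨ha.1.trans (le_max_left _ _), max_le ha.2 hb.2⟩
  have hst : s ≤ 2 * t := by linarith [le_max_left a b, le_max_right a b]
  have hft : t ^ α * φ t ≤ a ^ α * φ a + b ^ α * φ b := by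
    rcases max_choice a b with h | h <;> simp only [t, h] <;> linarith
  calc s ^ α * φ s ≤ (2 * t) ^ α * (K * φ t) :=
        mul_le_mul (Real.rpow_le_rpow hs.1 hst hα) (hK s hs t ht hst) (hφnn s hs)
          (Real.rpow_nonneg (by linarith [ht.1]) α)
    _ = 2 ^ α * K * (t ^ α * φ t) := by rw [Real.mul_rpow zero_le_two ht.1]; ring
    _ ≤ _ := by gcongr

lemma equivalence_EF {f : ℝ → ℝ} (h0 : f 0 = 0) (hnn : ∀ t ∈ Icc (0 : ℝ) 1, 0 ≤ f t) {K : ℝ}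
    (hK : ∀ s ∈ Icc (0 : ℝ) 1, ∀ a ∈ Icc (0 : ℝ) 1, ∀ b ∈ Icc (0 : ℝ) 1,
      s ≤ a + b → f s ≤ K * (f a + f b)) :
    Equivalence (EF f) where
  refl x := by simp [EF, h0]
  symm {x y} h := by simpa only [EF, abs_sub_comm] using h
  trans {x y z} hxy hyz := by
    refine Summable.of_nonneg_of_le (fun n => hnn _ (abs_sub_mem_Icc (x n).2 (z n).2))
      (fun n => ?_) ((hxy.add hyz).mul_left K)
    exact hK _ (abs_sub_mem_Icc (x n).2 (z n).2) _ (abs_sub_mem_Icc (x n).2 (y n).2)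
      _ (abs_sub_mem_Icc (y n).2 (z n).2) (abs_sub_le _ _ _)

theorem stmt3 (α : ℝ) (hα : 1 ≤ α) (φ : ℝ → ℝ)
    (hφnn : ∀ t ∈ Icc (0:ℝ) 1, 0 ≤ φ t)
    (hφei : EssIncOn φ (Icc 0 1)) (hhalf : 0 < φ (1/2))
    (hδ : ∃ δ > (0:ℝ), ∀ n : ℕ, δ * φ ((1/2:ℝ)^n) ≤ φ ((1/2:ℝ)^(2*n))) :
    Equivalence (EF (fun t => t ^ α * φ t)) ∧
    ∃ ε > (0:ℝ), ∃ M : ℕ, ∀ n > M, ∀ x ∈ Icc (0:ℝ) 1, ∀ y ∈ Icc (0:ℝ) 1,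
      φ x ≤ ε * φ y * φ ((1/2:ℝ)^n) → x ≤ y / 2^(n+1) := by
  obtain ⟨C, hC1, hφ⟩ := hφei
  obtain ⟨δ, hδ0, hδ⟩ := hδ
  have hC0 : 0 < C := by linarith
  set u : ℕ → ℝ := fun k => φ ((1 / 2 : ℝ) ^ k)
  have hu : ∀ k, 0 ≤ u k := fun k => hφnn _ (half_pow_mem_Icc k)
  have hu_anti : ∀ j k, j ≤ k → u k ≤ C * u j := fun _ _ => le_mul_half_pow_of_le hφ
  have hu1 : 0 < u 1 := by simpa [u] using hhalf
  have hu0 : 0 < u 0 := pos_of_mul_pos_right (hu1.trans_le (hu_anti 0 1 zero_le_one)) hC0.le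
  obtain ⟨c, hc0, hsucc⟩ := exists_pos_mul_le_succ hu hC0 hu_anti hδ hδ0 hu0 hu1
  have hlow : ∀ k q, q ≤ 2 * k + 2 → δ * c ^ 2 * u k ≤ C * u q := fun _ _ hq =>
    mul_sq_mul_le_of_le_two_mul_add_two hu_anti hδ hc0.le hsucc hq
  obtain ⟨K, hK0, hK⟩ := exists_le_mul_of_le_two_mul hφnn hφ hC0 (by positivity) hlow
  obtain ⟨b, hb0, hprod⟩ := exists_pos_mul_mul_le hu hC0 hu_anti (by positivity) hlow hu0
  have hpos := pos_of_half_pow_pos hφ hC0.le (pos_of_mul_le_succ hc0 hsucc hu0)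
  obtain ⟨ε, hε0, hε⟩ := exists_pos_forall_le_div_two_pow hφnn hφ hC0 hpos hb0 hprod
  refine ⟨equivalence_EF (K := 2 ^ α * K) (by simp [Real.zero_rpow (by linarith : α ≠ 0)]) ?_ ?_,
    ε, hε0, 0, fun n _ => hε n⟩
  · exact fun t ht => mul_nonneg (Real.rpow_nonneg ht.1 α) (hφnn t ht)
  · exact fun s hs a ha b hb hsab =>
      rpow_mul_le_of_le_add (by linarith) hφnn hK0 hK hs ha hb hsab
end

section
/- Let 1 ≤ α < ∞ and let φ, ψ : [0,1] → [0,∞), where φ is essentially increasing on [0,1] and there is δ > 0 such that φ(1/2^{n+1}) ≥ δ·φ(1/2^n) for every n < ω. Set f(x) = x^α·φ(x) and g(x) = x^α·ψ(x) for x ∈ [0,1]; suppose f and g are continuous and essentially increasing on [0,1] and that E_f and E_g are equivalence relations on [0,1]^ω. Assume there is μ : ω → [0,∞) with μ(n) ≤ 2^n for every n, and there is L ≥ 1 such that for every n < ω: Σ_{i=0}^∞ (μ(n+i)^α/2^{iα})·ψ(μ(n+i)/2^{n+i}) ≤ L·Σ_{i=0}^n μ(i)^α·ψ(μ(i)/2^n),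 and for every n ≥ 1, μ(n) ≤ L·max_{i<n} μ(i). If (φ(1/2^n))_{n<ω} ≈ (Σ_{i=0}^n μ(i)^α·ψ(μ(i)/2^n))_{n<ω}, then E_f ≤_B E_g. -/
open Set

/-!
The reduction sends `x ∈ [0,1]` to the coordinates `μ k / 2 ^ k * τ k j x`, `(k, j) ∈ ℕ × ℕ`,
where the `τ k j` are trapezoidal bumps of width `2⁻ᵏ` on a grid of mesh `2⁻ᵏ / 16`; applied
coordinatewise (after `ℕ ≃ ℕ × ℕ × ℕ`) this is a continuous map `[0,1]^ω → [0,1]^ω`.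

With `f t = t ^ α * φ t` and `g t = t ^ α * ψ t`, the sum in the approximation hypothesis
equals `2 ^ (n α) * P n` for `P n = Σ_{k ≤ n} g (μ k / 2 ^ n)`, so the hypothesis says
`f (2⁻ⁿ) ≈ P n`. It therefore suffices that for `2⁻ⁿ⁻¹ < |s - t| ≤ 2⁻ⁿ` the `g`-sum of the
coordinate differences of `s` and `t` is `≈ P n`. From below: at every scale `k ≤ n` some bump separates `s` and `t` by `μ k / 2 ^ n`.
From above: at each scale only 34 bumps move, each by at most `min (μ k / 2 ^ k) (4 μ k |s - t|)`;
with `m = n - 2` this gives `P m` from the scales `k < m` plus the tail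
`Σ_{k ≥ m} g (μ k / 2 ^ k) ≤ L * P m`, and the doubling condition on `φ` carries `f` from scale
`m` back to `|s - t|`.
-/

noncomputable def trapBump (E c x : ℝ) : ℝ :=
  max 0 (min (min ((x - c) / (E / 4)) ((c + E - x) / (E / 4))) 1)

section TrapBump

variable {E c x : ℝ}

lemma trapBump_nonneg (E c x : ℝ) : 0 ≤ trapBump E c x := le_max_left _ _

lemma trapBump_le_one (E c x : ℝ) : trapBump E c x ≤ 1 :=
  max_le zero_le_one (min_le_right _ _)

lemma continuous_trapBump (E c : ℝ) : Continuous (trapBump E c) := by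
  unfold trapBump
  fun_prop

lemma trapBump_eq_zero_of_le (hE : 0 < E) (hx : x ≤ c) : trapBump E c x = 0 :=
  max_eq_left <| (min_le_left _ _).trans <| (min_le_left _ _).trans <|
    div_nonpos_of_nonpos_of_nonneg (by linarith) (by linarith)

lemma trapBump_eq_zero_of_ge (hE : 0 < E) (hx : c + E ≤ x) : trapBump E c x = 0 :=
  max_eq_left <| (min_le_left _ _).trans <| (min_le_right _ _).trans <|
    div_nonpos_of_nonpos_of_nonneg (by linarith) (by linarith)

lemma trapBump_eq_of_mem_Icc (hE : 0 < E) (h₁ : c ≤ x) (h₂ : x ≤ c + E / 4) :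
    trapBump E c x = (x - c) / (E / 4) := by
  have hE4 : 0 < E / 4 := by linarith
  have hA : (x - c) / (E / 4) ≤ 1 := (div_le_one hE4).mpr (by linarith)
  have hB : 1 ≤ (c + E - x) / (E / 4) := (le_div_iff₀ hE4).mpr (by linarith)
  rw [trapBump, min_eq_left (hA.trans hB), min_eq_left hA,
    max_eq_right (div_nonneg (by linarith) hE4.le)]

lemma trapBump_eq_one (hE : 0 < E) (h₁ : c + E / 4 ≤ x) (h₂ : x ≤ c + 3 * E / 4) :
    trapBump E c x = 1 := by
  have hE4 : 0 < E / 4 := by linarith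
  have hA : 1 ≤ (x - c) / (E / 4) := (le_div_iff₀ hE4).mpr (by linarith)
  have hB : 1 ≤ (c + E - x) / (E / 4) := (le_div_iff₀ hE4).mpr (by linarith)
  rw [trapBump, min_eq_right (le_min hA hB), max_eq_right zero_le_one]

lemma half_le_trapBump (hE : 0 < E) (h₁ : c + E / 8 ≤ x) (h₂ : x ≤ c + 3 * E / 4) :
    1 / 2 ≤ trapBump E c x := by
  have hE4 : 0 < E / 4 := by linarith
  have hA : 1 / 2 ≤ (x - c) / (E / 4) := (le_div_iff₀ hE4).mpr (by linarith)
  have hB : 1 / 2 ≤ (c + E - x) / (E / 4) := (le_div_iff₀ hE4).mpr (by linarith)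
  exact (le_min (le_min hA hB) (by norm_num)).trans (le_max_right _ _)

lemma abs_trapBump_sub_le (hE : 0 < E) (x y : ℝ) :
    |trapBump E c x - trapBump E c y| ≤ |x - y| / (E / 4) := by
  have hE4 : 0 < E / 4 := by linarith
  have hA : |(x - c) / (E / 4) - (y - c) / (E / 4)| = |x - y| / (E / 4) := by
    rw [div_sub_div_same, abs_div, abs_of_pos hE4, sub_sub_sub_cancel_right]
  have hB : |(c + E - x) / (E / 4) - (c + E - y) / (E / 4)| = |x - y| / (E / 4) := by
    rw [div_sub_div_same, abs_div, abs_of_pos hE4, sub_sub_sub_cancel_left, abs_sub_comm]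
  calc |trapBump E c x - trapBump E c y|
      ≤ |min (min ((x - c) / (E / 4)) ((c + E - x) / (E / 4))) 1
          - min (min ((y - c) / (E / 4)) ((c + E - y) / (E / 4))) 1| := by
        simpa only [trapBump, max_comm (0:ℝ)] using abs_max_sub_max_le_abs _ _ (0:ℝ)
    _ ≤ max |min ((x - c) / (E / 4)) ((c + E - x) / (E / 4))
          - min ((y - c) / (E / 4)) ((c + E - y) / (E / 4))| |1 - 1| :=
        abs_min_sub_min_le_max _ _ _ _
    _ ≤ max (max |(x - c) / (E / 4) - (y - c) / (E / 4)|
          |(c + E - x) / (E / 4) - (c + E - y) / (E / 4)|) |1 - 1| :=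
        max_le_max_right _ (abs_min_sub_min_le_max _ _ _ _)
    _ = |x - y| / (E / 4) := by
        rw [hA, hB, max_self, sub_self, abs_zero]
        exact max_eq_left (div_nonneg (abs_nonneg _) hE4.le)

end TrapBump

lemma exists_grid_point_mem_Icc {E a b : ℝ} (hE : 0 < E) (ha : -E ≤ a)
    (hab : a + E / 16 ≤ b) :
    ∃ j : ℕ, a ≤ j * (E / 16) - E ∧ j * (E / 16) - E ≤ b := by
  have hE16 : 0 < E / 16 := by linarith
  have h0 : 0 ≤ (a + E) / (E / 16) := div_nonneg (by linarith) hE16.le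
  refine ⟨⌈(a + E) / (E / 16)⌉₊, ?_, ?_⟩
  · have h := Nat.le_ceil ((a + E) / (E / 16))
    rw [div_le_iff₀ hE16] at h
    linarith
  · have h := mul_lt_mul_of_pos_right (Nat.ceil_lt_add_one h0) hE16
    rw [add_mul, div_mul_cancel₀ _ hE16.ne'] at h
    linarith

lemma exists_le_mul_abs_trapBump_sub {E d s t : ℝ} (hE : 0 < E) (hd₀ : 0 < d)
    (hd : d ≤ E / 2 ∨ d = E) (hs : 0 ≤ s) (hst : d / 2 ≤ t - s) :
    ∃ j : ℕ, d ≤ E * |trapBump E (j * (E / 16) - E) t - trapBump E (j * (E / 16) - E) s| := by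
  have hdE : d ≤ E := by rcases hd with h | h <;> linarith
  -- Place the bump with `s` left of it and `t` on its plateau, or both on its rising edge,
  -- or `s` left of it and `t` above half height.
  rcases le_or_gt (5 * E / 16) (t - s) with hfar | hnear
  · obtain ⟨j, hj₁, hj₂⟩ := exists_grid_point_mem_Icc hE (a := max s (t - 3 * E / 4))
      (b := t - E / 4) (le_max_of_le_left (by linarith))
      (le_sub_iff_add_le.mp (max_le (by linarith) (by linarith)))
    refine ⟨j, ?_⟩
    rw [trapBump_eq_one hE (by linarith) (by linarith [le_max_right s (t - 3 * E / 4)]),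
      trapBump_eq_zero_of_le hE ((le_max_left _ _).trans hj₁)]
    simpa using hdE
  have hdE2 : d ≤ E / 2 := hd.resolve_right fun h => by linarith
  rcases le_or_gt (t - s) (3 * E / 16) with hclose | hmid
  · obtain ⟨j, hj₁, hj₂⟩ := exists_grid_point_mem_Icc hE (a := t - E / 4) (b := s)
      (by linarith) (by linarith)
    refine ⟨j, ?_⟩
    rw [trapBump_eq_of_mem_Icc hE (by linarith) (by linarith),
      trapBump_eq_of_mem_Icc hE hj₂ (by linarith), div_sub_div_same, sub_sub_sub_cancel_right,
      abs_of_nonneg (div_nonneg (by linarith) (by linarith)), mul_div_assoc', div_div_eq_mul_div]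
    rw [le_div_iff₀ hE]
    nlinarith
  · obtain ⟨j, hj₁, hj₂⟩ := exists_grid_point_mem_Icc hE (a := max s (t - 3 * E / 4))
      (b := t - E / 8) (le_max_of_le_left (by linarith))
      (le_sub_iff_add_le.mp (max_le (by linarith) (by linarith)))
    refine ⟨j, ?_⟩
    have ht := half_le_trapBump hE (c := j * (E / 16) - E) (x := t) (by linarith)
      (by linarith [le_max_right s (t - 3 * E / 4)])
    rw [trapBump_eq_zero_of_le hE ((le_max_left _ _).trans hj₁), sub_zero,
      abs_of_nonneg (trapBump_nonneg _ _ _)]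
    nlinarith

noncomputable def gridBump (k j : ℕ) (x : ℝ) : ℝ :=
  trapBump (2 ^ k)⁻¹ (j * ((2 ^ k)⁻¹ / 16) - (2 ^ k)⁻¹) x

noncomputable def gridWindow (k : ℕ) (x : ℝ) : Finset ℕ :=
  Finset.Icc ⌊x * (16 * 2 ^ k)⌋₊ (⌊x * (16 * 2 ^ k)⌋₊ + 16)

section GridBump

variable {k j : ℕ} {x : ℝ}

lemma gridBump_nonneg (k j : ℕ) (x : ℝ) : 0 ≤ gridBump k j x := trapBump_nonneg _ _ _

lemma gridBump_le_one (k j : ℕ) (x : ℝ) : gridBump k j x ≤ 1 := trapBump_le_one _ _ _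

lemma continuous_gridBump (k j : ℕ) : Continuous (gridBump k j) := continuous_trapBump _ _

lemma abs_gridBump_sub_le_one (k j : ℕ) (x y : ℝ) :
    |gridBump k j x - gridBump k j y| ≤ 1 := by
  rw [abs_sub_le_iff]
  constructor <;> linarith [gridBump_nonneg k j x, gridBump_le_one k j x,
    gridBump_nonneg k j y, gridBump_le_one k j y]

lemma abs_gridBump_sub_le (k j : ℕ) (x y : ℝ) :
    |gridBump k j x - gridBump k j y| ≤ 4 * 2 ^ k * |x - y| := by
  have h := abs_trapBump_sub_le (c := j * ((2 ^ k)⁻¹ / 16) - (2 ^ k)⁻¹)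
    (by positivity : (0:ℝ) < (2 ^ k)⁻¹) x y
  exact h.trans_eq (by rw [div_div_eq_mul_div, div_inv_eq_mul]; ring)

lemma exists_le_abs_gridBump_sub {n : ℕ} (hkn : k ≤ n) {s t : ℝ} (hs : 0 ≤ s)
    (hst : (2 ^ (n + 1))⁻¹ ≤ t - s) :
    ∃ j : ℕ, (2 ^ n)⁻¹ ≤ (2 ^ k)⁻¹ * |gridBump k j t - gridBump k j s| := by
  have hhalf : ∀ m : ℕ, ((2:ℝ) ^ (m + 1))⁻¹ = (2 ^ m)⁻¹ / 2 := fun m => by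
    rw [pow_succ, mul_inv, div_eq_mul_inv]
  have hd : ((2:ℝ) ^ n)⁻¹ ≤ (2 ^ k)⁻¹ / 2 ∨ ((2:ℝ) ^ n)⁻¹ = (2 ^ k)⁻¹ := by
    rcases hkn.lt_or_eq with h | rfl
    · exact Or.inl (hhalf k ▸ inv_anti₀ (by positivity) (pow_le_pow_right₀ one_le_two h))
    · exact Or.inr rfl
  exact exists_le_mul_abs_trapBump_sub (by positivity) (by positivity) hd hs (hhalf n ▸ hst)

lemma gridBump_eq_zero_of_notMem (hx : 0 ≤ x) (hj : j ∉ gridWindow k x) :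
    gridBump k j x = 0 := by
  rw [gridWindow] at hj
  by_contra hne
  have hE : (0:ℝ) < (2 ^ k)⁻¹ := by positivity
  have h₁ : j * ((2 ^ k)⁻¹ / 16) - (2 ^ k)⁻¹ < x :=
    lt_of_not_ge fun h => hne (trapBump_eq_zero_of_le hE h)
  have h₂ : x < j * ((2 ^ k)⁻¹ / 16) :=
    lt_of_not_ge fun h => hne (trapBump_eq_zero_of_ge hE (by linarith))
  set y := x * (16 * 2 ^ k)
  have hy₁ : y < j := by
    have : x < j / (16 * 2 ^ k) := by convert h₂ using 1; field_simp
    rwa [lt_div_iff₀ (by positivity)] at this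
  have hy₂ : (j:ℝ) < y + 16 := by
    have : (j - 16) / (16 * 2 ^ k) < x := by convert h₁ using 1; field_simp
    rw [div_lt_iff₀ (by positivity)] at this
    linarith
  have hfloor_le := Nat.floor_le (by positivity : 0 ≤ y)
  have hlt_floor := Nat.lt_floor_add_one y
  have hlo : ⌊y⌋₊ < j := by exact_mod_cast hfloor_le.trans_lt hy₁
  have hhi : j < ⌊y⌋₊ + 17 := by exact_mod_cast (show (j:ℝ) < ⌊y⌋₊ + 17 by linarith)
  exact hj (Finset.mem_Icc.mpr ⟨hlo.le, by omega⟩)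

lemma card_gridWindow (k : ℕ) (x : ℝ) : (gridWindow k x).card = 17 := by
  rw [gridWindow, Nat.card_Icc]
  omega

end GridBump

lemma abs_sub_mem_Icc_s5 {a b : ℝ} (ha : a ∈ Icc (0:ℝ) 1) (hb : b ∈ Icc (0:ℝ) 1) :
    |a - b| ∈ Icc (0:ℝ) 1 :=
  ⟨abs_nonneg _, abs_sub_le_of_nonneg_of_le ha.1 ha.2 hb.1 hb.2⟩

theorem borelReducible_EF_of_tsum_equiv {ι : Type*} [Denumerable ι] {f g : ℝ → ℝ}
    (hfnn : ∀ x ∈ Icc (0:ℝ) 1, 0 ≤ f x) (hgnn : ∀ x ∈ Icc (0:ℝ) 1, 0 ≤ g x)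
    (F : ι → ℝ → ℝ) (hFm : ∀ i, Measurable (F i)) (hF : ∀ i x, F i x ∈ Icc (0:ℝ) 1)
    {A B : ℝ} (hFfg : ∀ s ∈ Icc (0:ℝ) 1, ∀ t ∈ Icc (0:ℝ) 1,
      Summable (fun i => g |F i s - F i t|) ∧
      f |s - t| ≤ A * ∑' i, g |F i s - F i t| ∧ ∑' i, g |F i s - F i t| ≤ B * f |s - t|) :
    BorelReducible (EF f) (EF g) := by
  let e : ℕ ≃ ℕ × ι := (Denumerable.eqv (ℕ × ι)).symm
  refine ⟨fun x q => ⟨F (e q).2 (x (e q).1), hF _ _⟩,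
    measurable_pi_lambda _ fun q =>
      ((hFm (e q).2).comp (measurable_pi_apply (e q).1).subtype_val).subtype_mk,
    fun x y => ?_⟩
  have hnn : 0 ≤ fun p : ℕ × ι => g |F p.2 (x p.1) - F p.2 (y p.1)| :=
    fun p => hgnn _ (abs_sub_mem_Icc_s5 (hF _ _) (hF _ _))
  change Summable (fun n => f |(x n : ℝ) - y n|) ↔
    Summable ((fun p : ℕ × ι => g |F p.2 (x p.1) - F p.2 (y p.1)|) ∘ e)
  rw [e.summable_iff, summable_prod_of_nonneg hnn]
  constructor
  · intro hxy
    exact ⟨fun n => (hFfg _ (x n).2 _ (y n).2).1,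
      (hxy.mul_left B).of_nonneg_of_le (fun n => tsum_nonneg fun i => hnn (n, i))
        fun n => (hFfg _ (x n).2 _ (y n).2).2.2⟩
  · rintro ⟨-, hxy⟩
    exact (hxy.mul_left A).of_nonneg_of_le (fun n => hfnn _ (abs_sub_mem_Icc_s5 (x n).2 (y n).2))
      fun n => (hFfg _ (x n).2 _ (y n).2).2.1

noncomputable def dyadicCoord (μ : ℕ → ℝ) (p : ℕ × ℕ) (x : ℝ) : ℝ :=
  μ p.1 / 2 ^ p.1 * gridBump p.1 p.2 x

section DyadicCoord

variable {μ : ℕ → ℝ}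

lemma continuous_dyadicCoord (μ : ℕ → ℝ) (p : ℕ × ℕ) : Continuous (dyadicCoord μ p) :=
  (continuous_gridBump _ _).const_mul _

lemma div_two_pow_mem_Icc (hμ₀ : ∀ k, 0 ≤ μ k) (hμ : ∀ k, μ k ≤ 2 ^ k) {k n : ℕ}
    (hkn : k ≤ n) :
    μ k / 2 ^ n ∈ Icc (0:ℝ) 1 :=
  ⟨div_nonneg (hμ₀ k) (by positivity),
    div_le_one_of_le₀ ((hμ k).trans (pow_le_pow_right₀ one_le_two hkn)) (by positivity)⟩

lemma dyadicCoord_mem_Icc (hμ₀ : ∀ k, 0 ≤ μ k) (hμ : ∀ k, μ k ≤ 2 ^ k) (p : ℕ × ℕ)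
    (x : ℝ) :
    dyadicCoord μ p x ∈ Icc (0:ℝ) 1 := by
  obtain ⟨h₀, h₁⟩ := div_two_pow_mem_Icc hμ₀ hμ (le_refl p.1)
  exact ⟨mul_nonneg h₀ (gridBump_nonneg _ _ _),
    mul_le_one₀ h₁ (gridBump_nonneg _ _ _) (gridBump_le_one _ _ _)⟩

lemma abs_dyadicCoord_sub (hμ₀ : ∀ k, 0 ≤ μ k) (k j : ℕ) (s t : ℝ) :
    |dyadicCoord μ (k, j) s - dyadicCoord μ (k, j) t|
      = μ k / 2 ^ k * |gridBump k j s - gridBump k j t| := by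
  rw [dyadicCoord, dyadicCoord, ← mul_sub, abs_mul,
    abs_of_nonneg (div_nonneg (hμ₀ k) (by positivity))]

lemma abs_dyadicCoord_sub_le (hμ₀ : ∀ k, 0 ≤ μ k) (k j : ℕ) (s t : ℝ) :
    |dyadicCoord μ (k, j) s - dyadicCoord μ (k, j) t| ≤ μ k / 2 ^ k := by
  rw [abs_dyadicCoord_sub hμ₀]
  exact mul_le_of_le_one_right (div_nonneg (hμ₀ k) (by positivity))
    (abs_gridBump_sub_le_one _ _ _ _)

lemma abs_dyadicCoord_sub_le_mul (hμ₀ : ∀ k, 0 ≤ μ k) (k j : ℕ) (s t : ℝ) :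
    |dyadicCoord μ (k, j) s - dyadicCoord μ (k, j) t| ≤ 4 * μ k * |s - t| := by
  rw [abs_dyadicCoord_sub hμ₀]
  calc μ k / 2 ^ k * |gridBump k j s - gridBump k j t|
      ≤ μ k / 2 ^ k * (4 * 2 ^ k * |s - t|) :=
        mul_le_mul_of_nonneg_left (abs_gridBump_sub_le _ _ _ _)
          (div_nonneg (hμ₀ k) (by positivity))
    _ = 4 * μ k * |s - t| := by field_simp

lemma exists_le_abs_dyadicCoord_sub (hμ₀ : ∀ k, 0 ≤ μ k) {k n : ℕ} (hkn : k ≤ n) {s t : ℝ}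
    (hs : 0 ≤ s) (ht : 0 ≤ t) (hst : (2 ^ (n + 1))⁻¹ ≤ |s - t|) :
    ∃ j, μ k / 2 ^ n ≤ |dyadicCoord μ (k, j) s - dyadicCoord μ (k, j) t| := by
  wlog h : t ≤ s generalizing s t
  · obtain ⟨j, hj⟩ := this ht hs (by rwa [abs_sub_comm]) (le_of_not_ge h)
    exact ⟨j, by rwa [abs_sub_comm]⟩
  obtain ⟨j, hj⟩ := exists_le_abs_gridBump_sub hkn ht
    (by rwa [abs_of_nonneg (sub_nonneg.2 h)] at hst)
  refine ⟨j, ?_⟩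
  rw [abs_dyadicCoord_sub hμ₀, div_eq_mul_inv, div_eq_mul_inv, mul_assoc]
  exact mul_le_mul_of_nonneg_left hj (hμ₀ k)

lemma dyadicCoord_sub_eq_zero {k j : ℕ} {s t : ℝ} (hs : 0 ≤ s) (ht : 0 ≤ t)
    (hj : j ∉ gridWindow k s ∪ gridWindow k t) :
    dyadicCoord μ (k, j) s - dyadicCoord μ (k, j) t = 0 := by
  rw [Finset.mem_union, not_or] at hj
  simp only [dyadicCoord, gridBump_eq_zero_of_notMem hs hj.1, gridBump_eq_zero_of_notMem ht hj.2,
    sub_self]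

end DyadicCoord

def EssIncOnWith (C : ℝ) (f : ℝ → ℝ) (D : Set ℝ) : Prop :=
  1 ≤ C ∧ ∀ x ∈ D, ∀ y ∈ D, x ≤ y → f x ≤ C * f y

noncomputable def dyadicSum (g : ℝ → ℝ) (μ : ℕ → ℝ) (n : ℕ) : ℝ :=
  ∑ i ∈ Finset.range (n + 1), g (μ i / 2 ^ n)

section Estimates

variable {g : ℝ → ℝ} {μ : ℕ → ℝ} {Cg : ℝ}

lemma summable_and_tsum_row_le (hg₀ : g 0 = 0) (hgnn : ∀ x ∈ Icc (0:ℝ) 1, 0 ≤ g x)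
    (hg : EssIncOnWith Cg g (Icc 0 1)) {s t b : ℝ} (hs : 0 ≤ s) (ht : 0 ≤ t)
    (hb : b ∈ Icc (0:ℝ) 1) (k : ℕ)
    (hcap : ∀ j, |dyadicCoord μ (k, j) s - dyadicCoord μ (k, j) t| ≤ b) :
    Summable (fun j => g |dyadicCoord μ (k, j) s - dyadicCoord μ (k, j) t|) ∧
      ∑' j, g |dyadicCoord μ (k, j) s - dyadicCoord μ (k, j) t| ≤ 34 * Cg * g b := by
  set W := gridWindow k s ∪ gridWindow k t
  have hzero : ∀ j ∉ W, g |dyadicCoord μ (k, j) s - dyadicCoord μ (k, j) t| = 0 :=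
    fun j hj => by
      rw [dyadicCoord_sub_eq_zero hs ht hj, abs_zero, hg₀]
  have hcard : (W.card : ℝ) ≤ 34 := by
    exact_mod_cast (Finset.card_union_le _ _).trans_eq (by rw [card_gridWindow, card_gridWindow])
  have hterm : ∀ j, g |dyadicCoord μ (k, j) s - dyadicCoord μ (k, j) t| ≤ Cg * g b := fun j =>
    hg.2 _ ⟨abs_nonneg _, (hcap j).trans hb.2⟩ _ hb (hcap j)
  refine ⟨summable_of_ne_finset_zero hzero, ?_⟩
  rw [tsum_eq_sum hzero]
  calc ∑ j ∈ W, g |dyadicCoord μ (k, j) s - dyadicCoord μ (k, j) t|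
      ≤ W.card • (Cg * g b) := Finset.sum_le_card_nsmul _ _ _ fun j _ => hterm j
    _ = W.card * (Cg * g b) := nsmul_eq_mul _ _
    _ ≤ 34 * (Cg * g b) :=
        mul_le_mul_of_nonneg_right hcard (mul_nonneg (zero_le_one.trans hg.1) (hgnn b hb))
    _ = 34 * Cg * g b := by ring

lemma summable_and_tsum_le (hg₀ : g 0 = 0) (hgnn : ∀ x ∈ Icc (0:ℝ) 1, 0 ≤ g x)
    (hg : EssIncOnWith Cg g (Icc 0 1)) (hμ₀ : ∀ k, 0 ≤ μ k) (hμ : ∀ k, μ k ≤ 2 ^ k)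
    {L : ℝ} (hr : Summable fun k => g (μ k / 2 ^ k)) {m : ℕ}
    (hR : ∑' i, g (μ (m + i) / 2 ^ (m + i)) ≤ L * dyadicSum g μ m)
    {s t : ℝ} (hs : 0 ≤ s) (ht : 0 ≤ t) (hm : 0 < m → 4 * |s - t| ≤ (2 ^ m)⁻¹) :
    Summable (fun p => g |dyadicCoord μ p s - dyadicCoord μ p t|) ∧
      ∑' p, g |dyadicCoord μ p s - dyadicCoord μ p t|
        ≤ 34 * Cg * ((1 + L) * dyadicSum g μ m) := by
  set b : ℕ → ℝ := fun k => μ k / 2 ^ max k m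
  have hb : ∀ k, b k ∈ Icc (0:ℝ) 1 :=
    fun k => div_two_pow_mem_Icc hμ₀ hμ (le_max_left k m)
  have hcap : ∀ k j, |dyadicCoord μ (k, j) s - dyadicCoord μ (k, j) t| ≤ b k := by
    intro k j
    rcases le_or_gt m k with hk | hk
    · simpa only [b, max_eq_left hk] using abs_dyadicCoord_sub_le hμ₀ k j s t
    · calc |dyadicCoord μ (k, j) s - dyadicCoord μ (k, j) t| ≤ μ k * (4 * |s - t|) := by
            linarith [abs_dyadicCoord_sub_le_mul hμ₀ k j s t]
        _ ≤ μ k * (2 ^ m)⁻¹ := mul_le_mul_of_nonneg_left (hm (by omega)) (hμ₀ k)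
        _ = b k := by simp only [b, max_eq_right hk.le, div_eq_mul_inv]
  have hrows := fun k => summable_and_tsum_row_le hg₀ hgnn hg hs ht (hb k) k (hcap k)
  have htail : ∀ i, b (i + m) = μ (m + i) / 2 ^ (m + i) := fun i => by
    simp only [b, add_comm i m, max_eq_left (Nat.le_add_right m i)]
  have hbsum : Summable fun k => g (b k) :=
    (summable_nat_add_iff m).1 <| by
      simpa only [htail, add_comm m] using (summable_nat_add_iff m).2 hr
  have hbtsum : ∑' k, g (b k) ≤ (1 + L) * dyadicSum g μ m := by
    rw [← hbsum.sum_add_tsum_nat_add m]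
    have hhead : ∑ k ∈ Finset.range m, g (b k) ≤ dyadicSum g μ m := by
      rw [dyadicSum, Finset.sum_range_succ]
      refine le_add_of_le_of_nonneg (Finset.sum_le_sum fun k hk => le_of_eq ?_)
        (hgnn _ (div_two_pow_mem_Icc hμ₀ hμ le_rfl))
      simp only [b, max_eq_right (Finset.mem_range.1 hk).le]
    simp only [htail]
    linarith
  have hnn : 0 ≤ fun p : ℕ × ℕ => g |dyadicCoord μ p s - dyadicCoord μ p t| :=
    fun p => hgnn _ ⟨abs_nonneg _, (hcap p.1 p.2).trans (hb p.1).2⟩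
  have hrowsum : Summable fun k => ∑' j, g |dyadicCoord μ (k, j) s - dyadicCoord μ (k, j) t| :=
    (hbsum.mul_left (34 * Cg)).of_nonneg_of_le (fun k => tsum_nonneg fun j => hnn (k, j))
      fun k => (hrows k).2
  have hsum := (summable_prod_of_nonneg hnn).2 ⟨fun k => (hrows k).1, hrowsum⟩
  refine ⟨hsum, ?_⟩
  calc ∑' p, g |dyadicCoord μ p s - dyadicCoord μ p t|
      = ∑' k, ∑' j, g |dyadicCoord μ (k, j) s - dyadicCoord μ (k, j) t| :=
        hsum.tsum_prod' fun k => (hrows k).1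
    _ ≤ ∑' k, 34 * Cg * g (b k) :=
        hrowsum.tsum_le_tsum (fun k => (hrows k).2) (hbsum.mul_left _)
    _ = 34 * Cg * ∑' k, g (b k) := tsum_mul_left
    _ ≤ 34 * Cg * ((1 + L) * dyadicSum g μ m) :=
        mul_le_mul_of_nonneg_left hbtsum (by linarith [hg.1])

lemma dyadicSum_le_tsum (hgnn : ∀ x ∈ Icc (0:ℝ) 1, 0 ≤ g x)
    (hg : EssIncOnWith Cg g (Icc 0 1)) (hμ₀ : ∀ k, 0 ≤ μ k) (hμ : ∀ k, μ k ≤ 2 ^ k) {n : ℕ}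
    {s t : ℝ} (hs : 0 ≤ s) (ht : 0 ≤ t) (hst : (2 ^ (n + 1))⁻¹ ≤ |s - t|)
    (hsum : Summable fun p => g |dyadicCoord μ p s - dyadicCoord μ p t|) :
    dyadicSum g μ n ≤ Cg * ∑' p, g |dyadicCoord μ p s - dyadicCoord μ p t| := by
  have hmem : ∀ p : ℕ × ℕ, |dyadicCoord μ p s - dyadicCoord μ p t| ∈ Icc (0:ℝ) 1 :=
    fun p => ⟨abs_nonneg _, (abs_dyadicCoord_sub_le hμ₀ p.1 p.2 s t).trans
      (div_two_pow_mem_Icc hμ₀ hμ le_rfl).2⟩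
  have hnn : 0 ≤ fun p : ℕ × ℕ => g |dyadicCoord μ p s - dyadicCoord μ p t| :=
    fun p => hgnn _ (hmem p)
  obtain ⟨hrow, hrowsum⟩ := (summable_prod_of_nonneg hnn).1 hsum
  have hCg : 0 ≤ Cg := zero_le_one.trans hg.1
  have hterm : ∀ k ∈ Finset.range (n + 1),
      g (μ k / 2 ^ n) ≤ Cg * ∑' j, g |dyadicCoord μ (k, j) s - dyadicCoord μ (k, j) t| := by
    intro k hk
    have hkn := Finset.mem_range_succ_iff.1 hk
    obtain ⟨j, hj⟩ := exists_le_abs_dyadicCoord_sub hμ₀ hkn hs ht hst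
    calc g (μ k / 2 ^ n) ≤ Cg * g |dyadicCoord μ (k, j) s - dyadicCoord μ (k, j) t| :=
          hg.2 _ (div_two_pow_mem_Icc hμ₀ hμ hkn) _ (hmem _) hj
      _ ≤ Cg * ∑' j, g |dyadicCoord μ (k, j) s - dyadicCoord μ (k, j) t| :=
          mul_le_mul_of_nonneg_left ((hrow k).le_tsum j fun j _ => hnn (k, j)) hCg
  calc dyadicSum g μ n
      ≤ ∑ k ∈ Finset.range (n + 1),
          Cg * ∑' j, g |dyadicCoord μ (k, j) s - dyadicCoord μ (k, j) t| :=
        Finset.sum_le_sum hterm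
    _ = Cg * ∑ k ∈ Finset.range (n + 1),
          ∑' j, g |dyadicCoord μ (k, j) s - dyadicCoord μ (k, j) t| :=
        (Finset.mul_sum _ _ _).symm
    _ ≤ Cg * ∑' k, ∑' j, g |dyadicCoord μ (k, j) s - dyadicCoord μ (k, j) t| :=
        mul_le_mul_of_nonneg_left
          (hrowsum.sum_le_tsum _ fun k _ => tsum_nonneg fun j => hnn (k, j)) hCg
    _ = Cg * ∑' p, g |dyadicCoord μ p s - dyadicCoord μ p t| := by rw [hsum.tsum_prod' hrow]

end Estimates

lemma le_pow_mul_of_le_mul_succ {u : ℕ → ℝ} {D : ℝ} (hD : 1 ≤ D) (hu : ∀ n, 0 ≤ u n)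
    (h : ∀ n, u n ≤ D * u (n + 1)) {a b c : ℕ} (hab : a ≤ b) (hbc : b ≤ a + c) :
    u a ≤ D ^ c * u b := by
  obtain ⟨d, rfl⟩ := Nat.exists_eq_add_of_le hab
  have hiter : ∀ e, u a ≤ D ^ e * u (a + e) := fun e => by
    induction e with
    | zero => simp
    | succ e ih =>
      calc u a ≤ D ^ e * u (a + e) := ih
        _ ≤ D ^ e * (D * u (a + e + 1)) :=
          mul_le_mul_of_nonneg_left (h _) (pow_nonneg (zero_le_one.trans hD) e)
        _ = D ^ (e + 1) * u (a + (e + 1)) := by rw [pow_succ, mul_assoc, add_assoc]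
  exact (hiter d).trans (mul_le_mul_of_nonneg_right (pow_le_pow_right₀ hD (by omega)) (hu _))

lemma exists_inv_two_pow_lt_le {d : ℝ} (h₀ : 0 < d) (h₁ : d ≤ 1) :
    ∃ n : ℕ, (2 ^ (n + 1))⁻¹ < d ∧ d ≤ (2 ^ n)⁻¹ := by
  obtain ⟨n, hn₁, hn₂⟩ := exists_nat_pow_near ((one_le_inv₀ h₀).2 h₁) one_lt_two
  exact ⟨n, (inv_lt_comm₀ (by positivity) h₀).2 hn₂,
    (le_inv_comm₀ h₀ (by positivity)).2 hn₁⟩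

lemma inv_two_pow_mem_Icc (n : ℕ) : ((2:ℝ) ^ n)⁻¹ ∈ Icc (0:ℝ) 1 :=
  ⟨by positivity, inv_le_one_of_one_le₀ (one_le_pow₀ one_le_two)⟩

theorem exists_tsum_dyadicCoord_equiv {f g : ℝ → ℝ} {μ : ℕ → ℝ} {D L : ℝ}
    (hf₀ : f 0 = 0) (hfnn : ∀ x ∈ Icc (0:ℝ) 1, 0 ≤ f x) (hfei : EssIncOn f (Icc 0 1))
    (hfD : ∀ n : ℕ, f (2 ^ n)⁻¹ ≤ D * f (2 ^ (n + 1))⁻¹)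
    (hg₀ : g 0 = 0) (hgnn : ∀ x ∈ Icc (0:ℝ) 1, 0 ≤ g x) (hgei : EssIncOn g (Icc 0 1))
    (hμ₀ : ∀ k, 0 ≤ μ k) (hμ : ∀ k, μ k ≤ 2 ^ k) (hL : 0 ≤ L)
    (hr : Summable fun k => g (μ k / 2 ^ k))
    (hR : ∀ m, ∑' i, g (μ (m + i) / 2 ^ (m + i)) ≤ L * dyadicSum g μ m)
    (hfP : SeqEquiv (fun n => f (2 ^ n)⁻¹) (dyadicSum g μ)) :
    ∃ A B : ℝ, ∀ s ∈ Icc (0:ℝ) 1, ∀ t ∈ Icc (0:ℝ) 1,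
      Summable (fun p => g |dyadicCoord μ p s - dyadicCoord μ p t|) ∧
      f |s - t| ≤ A * ∑' p, g |dyadicCoord μ p s - dyadicCoord μ p t| ∧
      ∑' p, g |dyadicCoord μ p s - dyadicCoord μ p t| ≤ B * f |s - t| := by
  obtain ⟨Cf, hCf, hf⟩ := hfei
  obtain ⟨Cg, hg⟩ : ∃ C, EssIncOnWith C g (Icc 0 1) := hgei
  obtain ⟨C, hC, hfP⟩ := hfP
  have hPf : ∀ n, dyadicSum g μ n ≤ C * f (2 ^ n)⁻¹ := fun n =>
    (div_le_iff₀ (by linarith)).1 (hfP n).1 |>.trans_eq (mul_comm _ _)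
  set D' := max D 1
  have hfD' : ∀ n : ℕ, f (2 ^ n)⁻¹ ≤ D' * f (2 ^ (n + 1))⁻¹ := fun n =>
    (hfD n).trans (mul_le_mul_of_nonneg_right (le_max_left _ _) (hfnn _ (inv_two_pow_mem_Icc _)))
  refine ⟨Cf * C * Cg, 34 * Cg * (1 + L) * C * D' ^ 3 * Cf, fun s hs t ht => ?_⟩
  rcases eq_or_ne s t with rfl | hne
  · simp [hf₀, hg₀]
  obtain ⟨n, hn₁, hn₂⟩ := exists_inv_two_pow_lt_le (abs_sub_pos.2 hne)
    (abs_sub_mem_Icc_s5 hs ht).2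
  have hm : 0 < n - 2 → 4 * |s - t| ≤ (2 ^ (n - 2))⁻¹ := fun hm => by
    obtain ⟨m, rfl⟩ : ∃ m, n = m + 2 := ⟨n - 2, by omega⟩
    rw [Nat.add_sub_cancel, pow_add] at *
    norm_num at hn₂ ⊢
    linarith
  obtain ⟨hsum, hup⟩ := summable_and_tsum_le hg₀ hgnn hg hμ₀ hμ hr (hR _) hs.1 ht.1 hm
  have hlow := dyadicSum_le_tsum hgnn hg hμ₀ hμ hs.1 ht.1 hn₁.le hsum
  have hfn : f |s - t| ≤ Cf * f (2 ^ n)⁻¹ :=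
    hf _ (abs_sub_mem_Icc_s5 hs ht) _ (inv_two_pow_mem_Icc n) hn₂
  have hfn' : f (2 ^ (n + 1))⁻¹ ≤ Cf * f |s - t| :=
    hf _ (inv_two_pow_mem_Icc _) _ (abs_sub_mem_Icc_s5 hs ht) hn₁.le
  have hdouble : f (2 ^ (n - 2))⁻¹ ≤ D' ^ 3 * f (2 ^ (n + 1))⁻¹ :=
    le_pow_mul_of_le_mul_succ (le_max_right D 1) (fun k => hfnn _ (inv_two_pow_mem_Icc k)) hfD'
      (by omega) (by omega)
  have hCg : 0 ≤ Cg := zero_le_one.trans hg.1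
  refine ⟨hsum, ?_, ?_⟩
  · calc f |s - t| ≤ Cf * f (2 ^ n)⁻¹ := hfn
      _ ≤ Cf * (C * dyadicSum g μ n) := by gcongr; exact (hfP n).2
      _ ≤ Cf * (C * (Cg * ∑' p, g |dyadicCoord μ p s - dyadicCoord μ p t|)) := by gcongr
      _ = Cf * C * Cg * ∑' p, g |dyadicCoord μ p s - dyadicCoord μ p t| := by ring
  · calc ∑' p, g |dyadicCoord μ p s - dyadicCoord μ p t|
        ≤ 34 * Cg * ((1 + L) * dyadicSum g μ (n - 2)) := hup
      _ ≤ 34 * Cg * ((1 + L) * (C * (D' ^ 3 * (Cf * f |s - t|)))) := by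
        gcongr
        calc dyadicSum g μ (n - 2) ≤ C * f (2 ^ (n - 2))⁻¹ := hPf _
          _ ≤ C * (D' ^ 3 * (Cf * f |s - t|)) := by grw [hdouble, hfn']
      _ = 34 * Cg * (1 + L) * C * D' ^ 3 * Cf * f |s - t| := by ring

section RpowWeights

variable {α : ℝ} {φ ψ : ℝ → ℝ} {μ : ℕ → ℝ}

lemma rpow_mul_apply_div {x c : ℝ} (hx : 0 ≤ x) (hc : 0 < c) :
    x ^ α * ψ (x / c) = c ^ α * ((x / c) ^ α * ψ (x / c)) := by
  rw [Real.div_rpow hx hc.le]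
  field_simp

lemma rpow_mul_apply_inv_two_pow (n : ℕ) :
    φ ((1 / 2) ^ n) = (2 ^ n) ^ α * (((2:ℝ) ^ n)⁻¹ ^ α * φ (2 ^ n)⁻¹) := by
  rw [one_div, inv_pow, Real.inv_rpow (by positivity)]
  field_simp

lemma rpow_mul_apply_inv_two_pow_le_mul_succ {δ : ℝ} (hδ₀ : 0 < δ)
    (hδ : ∀ n : ℕ, δ * φ ((1 / 2) ^ n) ≤ φ ((1 / 2) ^ (n + 1))) (n : ℕ) :
    ((2:ℝ) ^ n)⁻¹ ^ α * φ (2 ^ n)⁻¹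
      ≤ 2 ^ α / δ * (((2:ℝ) ^ (n + 1))⁻¹ ^ α * φ (2 ^ (n + 1))⁻¹) := by
  have h := hδ n
  have hsucc : ((2:ℝ) ^ (n + 1)) ^ α = (2 ^ n) ^ α * 2 ^ α := by
    rw [pow_succ, Real.mul_rpow (by positivity) zero_le_two]
  rw [rpow_mul_apply_inv_two_pow (φ := φ) (α := α) n,
    rpow_mul_apply_inv_two_pow (φ := φ) (α := α) (n + 1), hsucc] at h
  have hpos : (0:ℝ) < (2 ^ n) ^ α := by positivity
  rw [div_mul_eq_mul_div, le_div_iff₀ hδ₀, ← mul_le_mul_iff_right₀ hpos]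
  linear_combination h

lemma sum_rpow_mul_eq_dyadicSum (hμ₀ : ∀ k, 0 ≤ μ k) (n : ℕ) :
    ∑ i ∈ Finset.range (n + 1), μ i ^ α * ψ (μ i / 2 ^ n)
      = (2 ^ n) ^ α * dyadicSum (fun t => t ^ α * ψ t) μ n := by
  rw [dyadicSum, Finset.mul_sum]
  exact Finset.sum_congr rfl fun i _ => rpow_mul_apply_div (hμ₀ i) (by positivity)

lemma rpow_div_mul_apply_eq (hμ₀ : ∀ k, 0 ≤ μ k) (n i : ℕ) :
    μ (n + i) ^ α / (2:ℝ) ^ ((i:ℝ) * α) * ψ (μ (n + i) / 2 ^ (n + i))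
      = (2 ^ n) ^ α * ((μ (n + i) / 2 ^ (n + i)) ^ α * ψ (μ (n + i) / 2 ^ (n + i))) := by
  rw [div_mul_eq_mul_div, rpow_mul_apply_div (hμ₀ _) (by positivity), pow_add,
    Real.mul_rpow (by positivity) (by positivity), Real.rpow_mul zero_le_two, Real.rpow_natCast]
  field_simp

lemma summable_and_tsum_shift_le (hμ₀ : ∀ k, 0 ≤ μ k) {L : ℝ} {n : ℕ}
    (h : Summable
        (fun i : ℕ => μ (n + i) ^ α / (2:ℝ) ^ ((i:ℝ) * α) * ψ (μ (n + i) / 2 ^ (n + i)))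
      ∧ ∑' i : ℕ, μ (n + i) ^ α / (2:ℝ) ^ ((i:ℝ) * α) * ψ (μ (n + i) / 2 ^ (n + i))
        ≤ L * ∑ i ∈ Finset.range (n + 1), μ i ^ α * ψ (μ i / 2 ^ n)) :
    Summable (fun i => (μ (n + i) / 2 ^ (n + i)) ^ α * ψ (μ (n + i) / 2 ^ (n + i))) ∧
      ∑' i, (μ (n + i) / 2 ^ (n + i)) ^ α * ψ (μ (n + i) / 2 ^ (n + i))
        ≤ L * dyadicSum (fun t => t ^ α * ψ t) μ n := by
  have hpos : (0:ℝ) < (2 ^ n) ^ α := by positivity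
  simp only [rpow_div_mul_apply_eq hμ₀, tsum_mul_left, sum_rpow_mul_eq_dyadicSum hμ₀,
    summable_mul_left_iff hpos.ne'] at h
  refine ⟨h.1, ?_⟩
  rw [← mul_le_mul_iff_right₀ hpos]
  linarith [h.2]

lemma seqEquiv_dyadicSum (hμ₀ : ∀ k, 0 ≤ μ k)
    (h : SeqEquiv (fun n => φ ((1 / 2) ^ n))
      (fun n => ∑ i ∈ Finset.range (n + 1), μ i ^ α * ψ (μ i / 2 ^ n))) :
    SeqEquiv (fun n => ((2:ℝ) ^ n)⁻¹ ^ α * φ (2 ^ n)⁻¹)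
      (dyadicSum (fun t => t ^ α * ψ t) μ) := by
  obtain ⟨C, hC, h⟩ := h
  refine ⟨C, hC, fun n => ?_⟩
  have hpos : (0:ℝ) < (2 ^ n) ^ α := by positivity
  obtain ⟨h₁, h₂⟩ := h n
  simp only [rpow_mul_apply_inv_two_pow (φ := φ) (α := α) n, sum_rpow_mul_eq_dyadicSum hμ₀,
    mul_div_assoc] at h₁ h₂
  exact ⟨le_of_mul_le_mul_left h₁ hpos,
    le_of_mul_le_mul_left (h₂.trans_eq (mul_left_comm _ _ _)) hpos⟩

end RpowWeights

theorem stmt5_general (α : ℝ) (hα : 1 ≤ α) (φ ψ : ℝ → ℝ)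
    (hφnn : ∀ t ∈ Icc (0:ℝ) 1, 0 ≤ φ t) (hψnn : ∀ t ∈ Icc (0:ℝ) 1, 0 ≤ ψ t)
    (hδ : ∃ δ > (0:ℝ), ∀ n : ℕ, δ * φ ((1/2:ℝ)^n) ≤ φ ((1/2:ℝ)^(n+1)))
    (hfei : EssIncOn (fun t => t ^ α * φ t) (Icc 0 1))
    (hgei : EssIncOn (fun t => t ^ α * ψ t) (Icc 0 1))
    (μ : ℕ → ℝ) (hμnn : ∀ n, 0 ≤ μ n) (hμle : ∀ n, μ n ≤ 2 ^ n)
    (L : ℝ) (hL : 1 ≤ L)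
    (hsum : ∀ n : ℕ,
      Summable (fun i : ℕ => (μ (n+i) ^ α / (2:ℝ) ^ ((i:ℝ) * α)) * ψ (μ (n+i) / 2 ^ (n+i))) ∧
      (∑' i : ℕ, (μ (n+i) ^ α / (2:ℝ) ^ ((i:ℝ) * α)) * ψ (μ (n+i) / 2 ^ (n+i))) ≤
        L * ∑ i ∈ Finset.range (n+1), μ i ^ α * ψ (μ i / 2 ^ n))
    (happrox : SeqEquiv (fun n => φ ((1/2:ℝ)^n))
      (fun n => ∑ i ∈ Finset.range (n+1), μ i ^ α * ψ (μ i / 2 ^ n))) :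
    BorelReducible (EF (fun t => t ^ α * φ t)) (EF (fun t => t ^ α * ψ t)) := by
  obtain ⟨δ, hδ₀, hδ⟩ := hδ
  have hzero : ∀ χ : ℝ → ℝ, (0:ℝ) ^ α * χ 0 = 0 := fun χ => by
    rw [Real.zero_rpow (zero_lt_one.trans_le hα).ne', zero_mul]
  have hnn : ∀ χ : ℝ → ℝ, (∀ t ∈ Icc (0:ℝ) 1, 0 ≤ χ t) →
      ∀ t ∈ Icc (0:ℝ) 1, 0 ≤ t ^ α * χ t :=
    fun χ hχ t ht => mul_nonneg (Real.rpow_nonneg ht.1 α) (hχ t ht)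
  have htail := fun m => summable_and_tsum_shift_le hμnn (hsum m)
  obtain ⟨A, B, hAB⟩ := exists_tsum_dyadicCoord_equiv (hzero φ) (hnn φ hφnn) hfei
    (rpow_mul_apply_inv_two_pow_le_mul_succ hδ₀ hδ) (hzero ψ) (hnn ψ hψnn) hgei hμnn hμle
    (by linarith) (by simpa only [zero_add] using (htail 0).1) (fun m => (htail m).2)
    (seqEquiv_dyadicSum hμnn happrox)
  exact borelReducible_EF_of_tsum_equiv (hnn φ hφnn) (hnn ψ hψnn) (dyadicCoord μ)
    (fun p => (continuous_dyadicCoord μ p).measurable) (dyadicCoord_mem_Icc hμnn hμle) hAB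

theorem stmt5 (α : ℝ) (hα : 1 ≤ α) (φ ψ : ℝ → ℝ)
    (hφnn : ∀ t ∈ Icc (0:ℝ) 1, 0 ≤ φ t) (hψnn : ∀ t ∈ Icc (0:ℝ) 1, 0 ≤ ψ t)
    (hφei : EssIncOn φ (Icc 0 1))
    (hδ : ∃ δ > (0:ℝ), ∀ n : ℕ, δ * φ ((1/2:ℝ)^n) ≤ φ ((1/2:ℝ)^(n+1)))
    (hfc : ContinuousOn (fun t => t ^ α * φ t) (Icc 0 1))
    (hgc : ContinuousOn (fun t => t ^ α * ψ t) (Icc 0 1))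
    (hfei : EssIncOn (fun t => t ^ α * φ t) (Icc 0 1))
    (hgei : EssIncOn (fun t => t ^ α * ψ t) (Icc 0 1))
    (hEf : Equivalence (EF (fun t => t ^ α * φ t)))
    (hEg : Equivalence (EF (fun t => t ^ α * ψ t)))
    (μ : ℕ → ℝ) (hμnn : ∀ n, 0 ≤ μ n) (hμle : ∀ n, μ n ≤ 2 ^ n)
    (L : ℝ) (hL : 1 ≤ L)
    (hsum : ∀ n : ℕ,
      Summable (fun i : ℕ => (μ (n+i) ^ α / (2:ℝ) ^ ((i:ℝ) * α)) * ψ (μ (n+i) / 2 ^ (n+i))) ∧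
      (∑' i : ℕ, (μ (n+i) ^ α / (2:ℝ) ^ ((i:ℝ) * α)) * ψ (μ (n+i) / 2 ^ (n+i))) ≤
        L * ∑ i ∈ Finset.range (n+1), μ i ^ α * ψ (μ i / 2 ^ n))
    (hmax : ∀ n : ℕ, 1 ≤ n → ∃ i < n, μ n ≤ L * μ i)
    (happrox : SeqEquiv (fun n => φ ((1/2:ℝ)^n))
      (fun n => ∑ i ∈ Finset.range (n+1), μ i ^ α * ψ (μ i / 2 ^ n))) :
    BorelReducible (EF (fun t => t ^ α * φ t)) (EF (fun t => t ^ α * ψ t)) :=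
  stmt5_general α hα φ ψ hφnn hψnn hδ hfei hgei μ hμnn hμle L hL hsum happrox
end

section
/- Let μ : ω → ℝ and let ψ : [0,1] → [0,∞) be essentially increasing on [0,1] with ψ(1/2) > 0, and suppose there is λ > 0 such that ψ(1/2^{2n}) ≥ λ·ψ(1/2^n) for every n < ω. Assume there are 0 ≤ ε < 1 and n₀ < ω such that 2^{−εn} ≤ μ(i) ≤ 2^{εn} whenever n₀ ≤ i ≤ n < ω and μ(i) ≠ 0. Then there is K ≥ 1 such that ψ(1/2^n)/K ≤ ψ(μ(i)/2^n) ≤ K·ψ(1/2^n) whenever n₀ ≤ i ≤ n < ω and μ(i) ≠ 0. -/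
open Set

/-!
Write `φ n = ψ (2⁻ⁿ)`. Then `φ` is essentially decreasing, and iterating `λ φ n ≤ φ (2n)` gives
`φ m ≲ φ n` whenever `n ≤ 2ʲ (m + 1)` for a fixed `j`. The point `x = μ i / 2ⁿ` lies between
`2^(-2n)` and `2^(-m)` with `m = ⌊(1 - ε) n⌋`, so `φ (2n) ≲ ψ x ≲ φ m`, and both ends are
comparable to `φ n`, the first by one doubling step and the second since `(1 - ε) n < m + 1`.
-/

namespace EssAntitoneDoubling

variable {φ : ℕ → ℝ} {C lam : ℝ}

theorem pow_mul_le_two_pow_mul (hdouble : ∀ n, lam * φ n ≤ φ (2 * n)) (hlam : 0 ≤ lam)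
    (j m : ℕ) : lam ^ j * φ m ≤ φ (2 ^ j * m) := by
  induction j with
  | zero => simp
  | succ j ih =>
    calc lam ^ (j + 1) * φ m = lam * (lam ^ j * φ m) := by ring
      _ ≤ lam * φ (2 ^ j * m) := mul_le_mul_of_nonneg_left ih hlam
      _ ≤ φ (2 * (2 ^ j * m)) := hdouble _
      _ = φ (2 ^ (j + 1) * m) := by rw [pow_succ, mul_comm _ 2, mul_assoc]

theorem le_div_pow_mul_of_le_two_pow_mul (hanti : ∀ m n, m ≤ n → φ n ≤ C * φ m)
    (hdouble : ∀ n, lam * φ n ≤ φ (2 * n)) (hlam : 0 < lam) {j m n : ℕ} (hn : n ≤ 2 ^ j * m) :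
    φ m ≤ C / lam ^ j * φ n := by
  rw [div_mul_eq_mul_div, le_div_iff₀ (pow_pos hlam j), mul_comm]
  exact (pow_mul_le_two_pow_mul hdouble hlam.le j m).trans (hanti n _ hn)

theorem pos (hanti : ∀ m n, m ≤ n → φ n ≤ C * φ m) (hdouble : ∀ n, lam * φ n ≤ φ (2 * n))
    (hC : 0 < C) (hlam : 0 < lam) (hφ₁ : 0 < φ 1) (n : ℕ) : 0 < φ n := by
  have : lam ^ n * φ 1 ≤ C * φ n := by
    refine (pow_mul_le_two_pow_mul hdouble hlam.le n 1).trans (hanti n _ ?_)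
    simpa using (Nat.lt_two_pow_self).le
  exact pos_of_mul_pos_right ((mul_pos (pow_pos hlam n) hφ₁).trans_le this) hC.le

theorem exists_le_mul_succ (hanti : ∀ m n, m ≤ n → φ n ≤ C * φ m)
    (hdouble : ∀ n, lam * φ n ≤ φ (2 * n)) (hC : 0 < C) (hlam : 0 < lam) (hφ₁ : 0 < φ 1) :
    ∃ K, 0 < K ∧ ∀ m, φ m ≤ K * φ (m + 1) := by
  have hφ := pos hanti hdouble hC hlam hφ₁
  refine ⟨max (C / lam) (φ 0 / φ 1), lt_max_of_lt_left (div_pos hC hlam), ?_⟩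
  rintro (_ | m)
  · calc φ 0 = φ 0 / φ 1 * φ 1 := (div_mul_cancel₀ _ (hφ 1).ne').symm
      _ ≤ _ := mul_le_mul_of_nonneg_right (le_max_right _ _) (hφ 1).le
  · have : φ (m + 1) ≤ C / lam ^ 1 * φ (m + 1 + 1) :=
      le_div_pow_mul_of_le_two_pow_mul hanti hdouble hlam (by omega)
    rw [pow_one] at this
    exact this.trans (mul_le_mul_of_nonneg_right (le_max_left _ _) (hφ _).le)

theorem exists_le_mul_of_mul_lt_succ (hanti : ∀ m n, m ≤ n → φ n ≤ C * φ m)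
    (hdouble : ∀ n, lam * φ n ≤ φ (2 * n)) (hC : 0 < C) (hlam : 0 < lam) (hφ₁ : 0 < φ 1)
    {δ : ℝ} (hδ : 0 < δ) : ∃ K, 0 < K ∧ ∀ m n : ℕ, δ * n < m + 1 → φ m ≤ K * φ n := by
  obtain ⟨K, hK, hsucc⟩ := exists_le_mul_succ hanti hdouble hC hlam hφ₁
  obtain ⟨j, hj⟩ := pow_unbounded_of_one_lt δ⁻¹ one_lt_two
  refine ⟨K * (C / lam ^ j), mul_pos hK (div_pos hC (pow_pos hlam j)), fun m n hmn => ?_⟩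
  have hn : n ≤ 2 ^ j * (m + 1) := by
    rw [inv_lt_iff_one_lt_mul₀ hδ] at hj
    have : (n : ℝ) ≤ 2 ^ j * (m + 1) := by nlinarith [(n.cast_nonneg : (0 : ℝ) ≤ n)]
    exact_mod_cast this
  calc φ m ≤ K * φ (m + 1) := hsucc m
    _ ≤ K * (C / lam ^ j * φ n) :=
      mul_le_mul_of_nonneg_left (le_div_pow_mul_of_le_two_pow_mul hanti hdouble hlam hn) hK.le
    _ = _ := by ring

end EssAntitoneDoubling

theorem one_half_pow_eq_two_rpow_neg (m : ℕ) : (1 / 2 : ℝ) ^ m = (2 : ℝ) ^ (-(m : ℝ)) := by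
  rw [Real.rpow_neg zero_le_two, Real.rpow_natCast, one_div, inv_pow]

theorem div_two_pow_mem_Icc_s8 {ε a : ℝ} {n : ℕ} (hε : ε < 1) (hlo : (2 : ℝ) ^ (-(ε * n)) ≤ a)
    (hhi : a ≤ (2 : ℝ) ^ (ε * n)) :
    a / 2 ^ n ∈ Icc ((1 / 2 : ℝ) ^ (2 * n)) ((1 / 2 : ℝ) ^ ⌊(1 - ε) * n⌋₊) := by
  have hn : (0 : ℝ) ≤ n := n.cast_nonneg
  have hdiv : a / 2 ^ n = a * (2 : ℝ) ^ (-(n : ℝ)) := by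
    rw [← one_half_pow_eq_two_rpow_neg, div_eq_mul_one_div a, one_div_pow]
  rw [hdiv, one_half_pow_eq_two_rpow_neg, one_half_pow_eq_two_rpow_neg]
  constructor
  · calc (2 : ℝ) ^ (-((2 * n : ℕ) : ℝ)) = 2 ^ (-n - n : ℝ) := by push_cast; ring_nf
      _ ≤ 2 ^ (-(ε * n) - n) := Real.rpow_le_rpow_of_exponent_le one_le_two (by nlinarith)
      _ = 2 ^ (-(ε * n)) * 2 ^ (-(n : ℝ)) := by rw [sub_eq_add_neg, Real.rpow_add two_pos]
      _ ≤ a * 2 ^ (-(n : ℝ)) := by gcongr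
  · have hfloor : (⌊(1 - ε) * n⌋₊ : ℝ) ≤ (1 - ε) * n := Nat.floor_le (by nlinarith)
    calc a * 2 ^ (-(n : ℝ)) ≤ 2 ^ (ε * n) * 2 ^ (-(n : ℝ)) := by gcongr
      _ = 2 ^ (ε * n - n) := by rw [sub_eq_add_neg, Real.rpow_add two_pos]
      _ ≤ 2 ^ (-(⌊(1 - ε) * n⌋₊ : ℝ)) :=
        Real.rpow_le_rpow_of_exponent_le one_le_two (by linarith)

theorem div_le_and_le_mul_of_le_mul {a b A B : ℝ} (ha : 0 < a) (hA : 0 < A) (hab : a ≤ A * b)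
    (hba : b ≤ B * a) : a / max (max A B) 1 ≤ b ∧ b ≤ max (max A B) 1 * a := by
  have hb : 0 ≤ b := nonneg_of_mul_nonneg_right (ha.le.trans hab) hA
  have hK : 0 < max (max A B) 1 := lt_max_of_lt_right one_pos
  constructor
  · rw [div_le_iff₀ hK, mul_comm]
    exact hab.trans (mul_le_mul_of_nonneg_right (le_max_of_le_left (le_max_left _ _)) hb)
  · exact hba.trans (mul_le_mul_of_nonneg_right (le_max_of_le_left (le_max_right _ _)) ha.le)

theorem stmt8_general (μ : ℕ → ℝ) (ψ : ℝ → ℝ)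
    (hψei : EssIncOn ψ (Icc 0 1)) (hhalf : 0 < ψ (1/2))
    (hlam : ∃ lam > (0:ℝ), ∀ n : ℕ, lam * ψ ((1/2:ℝ)^n) ≤ ψ ((1/2:ℝ)^(2*n)))
    (ε : ℝ) (hε1 : ε < 1) (n₀ : ℕ)
    (hμ : ∀ i n : ℕ, n₀ ≤ i → i ≤ n → μ i ≠ 0 →
      (2:ℝ) ^ (-(ε * n)) ≤ μ i ∧ μ i ≤ (2:ℝ) ^ (ε * n)) :
    ∃ K : ℝ, 1 ≤ K ∧ ∀ i n : ℕ, n₀ ≤ i → i ≤ n → μ i ≠ 0 →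
      ψ ((1/2:ℝ)^n) / K ≤ ψ (μ i / 2^n) ∧ ψ (μ i / 2^n) ≤ K * ψ ((1/2:ℝ)^n) := by
  obtain ⟨C, hC1, hψC⟩ := hψei
  obtain ⟨lam, hlam, hdouble⟩ := hlam
  have hC : 0 < C := one_pos.trans_le hC1
  have hmem (m : ℕ) : (1 / 2 : ℝ) ^ m ∈ Icc (0 : ℝ) 1 :=
    ⟨by positivity, pow_le_one₀ (by norm_num) (by norm_num)⟩
  have hanti (m n : ℕ) (h : m ≤ n) : ψ ((1 / 2 : ℝ) ^ n) ≤ C * ψ ((1 / 2 : ℝ) ^ m) :=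
    hψC _ (hmem n) _ (hmem m) (pow_le_pow_of_le_one (by norm_num) (by norm_num) h)
  have hφ₁ : 0 < ψ ((1 / 2 : ℝ) ^ 1) := by rwa [pow_one]
  obtain ⟨K, hK, hKle⟩ := EssAntitoneDoubling.exists_le_mul_of_mul_lt_succ hanti hdouble hC hlam
    hφ₁ (sub_pos.mpr hε1)
  refine ⟨max (max (C / lam) (C * K)) 1, le_max_right _ _, fun i n hi hin hμi => ?_⟩
  obtain ⟨hμlo, hμhi⟩ := hμ i n hi hin hμi
  obtain ⟨hxlo, hxhi⟩ := div_two_pow_mem_Icc_s8 hε1 hμlo hμhi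
  have hx : μ i / 2 ^ n ∈ Icc (0 : ℝ) 1 :=
    ⟨(hmem _).1.trans hxlo, hxhi.trans (hmem _).2⟩
  refine div_le_and_le_mul_of_le_mul
    (EssAntitoneDoubling.pos hanti hdouble hC hlam hφ₁ n) (div_pos hC hlam) ?_ ?_
  · rw [div_mul_eq_mul_div, le_div_iff₀ hlam, mul_comm]
    exact (hdouble n).trans (hψC _ (hmem _) _ hx hxlo)
  · calc ψ (μ i / 2 ^ n) ≤ C * ψ ((1 / 2 : ℝ) ^ ⌊(1 - ε) * n⌋₊) := hψC _ hx _ (hmem _) hxhi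
      _ ≤ C * (K * ψ ((1 / 2 : ℝ) ^ n)) :=
        mul_le_mul_of_nonneg_left (hKle _ _ (Nat.lt_floor_add_one _)) hC.le
      _ = C * K * ψ ((1 / 2 : ℝ) ^ n) := by ring

theorem stmt8 (μ : ℕ → ℝ) (ψ : ℝ → ℝ)
    (hψnn : ∀ t ∈ Icc (0:ℝ) 1, 0 ≤ ψ t)
    (hψei : EssIncOn ψ (Icc 0 1)) (hhalf : 0 < ψ (1/2))
    (hlam : ∃ lam > (0:ℝ), ∀ n : ℕ, lam * ψ ((1/2:ℝ)^n) ≤ ψ ((1/2:ℝ)^(2*n)))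
    (ε : ℝ) (hε0 : 0 ≤ ε) (hε1 : ε < 1) (n₀ : ℕ)
    (hμ : ∀ i n : ℕ, n₀ ≤ i → i ≤ n → μ i ≠ 0 →
      (2:ℝ) ^ (-(ε * n)) ≤ μ i ∧ μ i ≤ (2:ℝ) ^ (ε * n)) :
    ∃ K : ℝ, 1 ≤ K ∧ ∀ i n : ℕ, n₀ ≤ i → i ≤ n → μ i ≠ 0 →
      ψ ((1/2:ℝ)^n) / K ≤ ψ (μ i / 2^n) ∧ ψ (μ i / 2^n) ≤ K * ψ ((1/2:ℝ)^n) :=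
  stmt8_general μ ψ hψei hhalf hlam ε hε1 n₀ hμ
end

section
/- Let (δ_m)_{m<ω} be a sequence in (0,1) with 0 < inf_m δ_m ≤ sup_m δ_m < 1, and let (k_m)_{m<ω} be a strictly increasing sequence of natural numbers with k_0 ≥ 2 and k_{m+1} ≥ 2·k_m for every m. Define u_0 = 1 and, for n > 0, u_n = δ_m·u_{n−1} if n = k_m for some m, and u_n = u_{n−1} otherwise. Let δ = inf_m δ_m. Then: (i) u_{k_m} = Π_{0≤i≤m} δ_i for every m, and u_n = u_{k_m} whenever k_m ≤ n < k_{m+1}; (ii) u_n ≥ u_{n+1} for every n and u_n → 0 as n → ∞; (iii) u_{2n} ≥ δ·u_n for every n < ω. -/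
/-! The sequence `u` is constant on each block `[k m, k (m+1))` and is multiplied by `δs m` on
entering it, which gives the product formula; the products are bounded by `(sup δs)^(m+1)`, so the
antitone sequence `u` tends to `0`. Since `k (m+2) ≥ 2 k (m+1)`, doubling an index of block `m`
lands in block `m` or `m+1`, so `u` drops by at most one factor `δs (m+1)` between `n` and `2n`. -/

open Set Filter Topology Finset

theorem apply_eq_of_forall_succ_eq {α : Type*} {f : ℕ → α} {a n : ℕ}
    (h : ∀ j, a ≤ j → j < n → f (j + 1) = f j) (han : a ≤ n) : f n = f a := by
  induction n, han using Nat.le_induction with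
  | base => rfl
  | succ n han ih => rw [h n han n.lt_succ_self, ih fun j hj hjn => h j hj (by omega)]

theorem StrictMono.ne_apply_of_lt_of_lt_succ {k : ℕ → ℕ} (hk : StrictMono k) {m j : ℕ}
    (h₁ : k m < j) (h₂ : j < k (m + 1)) (i : ℕ) : j ≠ k i := by
  rintro rfl
  have := hk.lt_iff_lt.1 h₁
  have := hk.lt_iff_lt.1 h₂
  omega

theorem Monotone.ne_apply_of_lt_apply_zero {k : ℕ → ℕ} (hk : Monotone k) {j : ℕ}
    (h : j < k 0) (i : ℕ) : j ≠ k i := by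
  rintro rfl
  exact h.not_ge (hk i.zero_le)

theorem Antitone.tendsto_of_tendsto_comp {ι ι' α : Type*} [Preorder ι]
    [ConditionallyCompleteLinearOrder α] [TopologicalSpace α] [OrderTopology α]
    {u : ι → α} {φ : ι' → ι} {l : Filter ι'} [l.NeBot] {a : α} (hu : Antitone u)
    (hbdd : BddBelow (range u)) (hφ : Tendsto φ l atTop) (h : Tendsto (u ∘ φ) l (𝓝 a)) :
    Tendsto u atTop (𝓝 a) := by
  have hinf := tendsto_atTop_ciInf hu hbdd
  rwa [tendsto_nhds_unique (hinf.comp hφ) h] at hinf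

theorem tendsto_prod_range_zero_of_le {f : ℕ → ℝ} {r : ℝ} (hf₀ : ∀ i, 0 ≤ f i)
    (hfr : ∀ i, f i ≤ r) (hr : r < 1) :
    Tendsto (fun m => ∏ i ∈ range m, f i) atTop (𝓝 0) := by
  refine squeeze_zero (fun m => prod_nonneg fun i _ => hf₀ i) (fun m => ?_)
    (tendsto_pow_atTop_nhds_zero_of_lt_one ((hf₀ 0).trans (hfr 0)) hr)
  calc ∏ i ∈ range m, f i ≤ ∏ _i ∈ range m, r :=
        prod_le_prod (fun i _ => hf₀ i) fun i _ => hfr i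
    _ = r ^ m := by rw [prod_const, card_range]

namespace StepSeq

variable {δs : ℕ → ℝ} {k : ℕ → ℕ} {u : ℕ → ℝ}

theorem apply_nonneg (hδ : ∀ m, 0 ≤ δs m) (hu0 : u 0 = 1)
    (huk : ∀ n m, n + 1 = k m → u (n + 1) = δs m * u n)
    (hunk : ∀ n, (∀ m, n + 1 ≠ k m) → u (n + 1) = u n) (n : ℕ) : 0 ≤ u n := by
  induction n with
  | zero => rw [hu0]; exact zero_le_one
  | succ n ih =>
    by_cases h : ∃ m, n + 1 = k m
    · obtain ⟨m, hm⟩ := h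
      rw [huk n m hm]
      exact mul_nonneg (hδ m) ih
    · rw [hunk n fun m hm => h ⟨m, hm⟩]
      exact ih

theorem antitone (hδ : ∀ m, δs m ∈ Set.Icc 0 1) (hu0 : u 0 = 1)
    (huk : ∀ n m, n + 1 = k m → u (n + 1) = δs m * u n)
    (hunk : ∀ n, (∀ m, n + 1 ≠ k m) → u (n + 1) = u n) : Antitone u := by
  refine antitone_nat_of_succ_le fun n => ?_
  by_cases h : ∃ m, n + 1 = k m
  · obtain ⟨m, hm⟩ := h
    rw [huk n m hm]
    exact mul_le_of_le_one_left (apply_nonneg (fun m => (hδ m).1) hu0 huk hunk n) (hδ m).2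
  · rw [hunk n fun m hm => h ⟨m, hm⟩]

theorem apply_eq_one_of_lt (hk : Monotone k) (hu0 : u 0 = 1)
    (hunk : ∀ n, (∀ m, n + 1 ≠ k m) → u (n + 1) = u n) {n : ℕ} (hn : n < k 0) : u n = 1 :=
  hu0 ▸ apply_eq_of_forall_succ_eq
    (fun j _ hjn => hunk j (hk.ne_apply_of_lt_apply_zero (by omega))) n.zero_le

theorem apply_eq_of_le_of_lt_succ (hk : StrictMono k)
    (hunk : ∀ n, (∀ m, n + 1 ≠ k m) → u (n + 1) = u n) {m n : ℕ}
    (h₁ : k m ≤ n) (h₂ : n < k (m + 1)) : u n = u (k m) :=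
  apply_eq_of_forall_succ_eq
    (fun j hj hjn => hunk j (hk.ne_apply_of_lt_of_lt_succ (m := m) (by omega) (by omega))) h₁

theorem apply_k_le_of_lt_succ (hk : StrictMono k) (hu : Antitone u)
    (hunk : ∀ n, (∀ m, n + 1 ≠ k m) → u (n + 1) = u n) {m n : ℕ} (hn : n < k (m + 1)) :
    u (k m) ≤ u n := by
  rcases le_total n (k m) with h | h
  · exact hu h
  · exact (apply_eq_of_le_of_lt_succ hk hunk h hn).ge

theorem apply_k_zero (hk : Monotone k) (hk0 : 0 < k 0) (hu0 : u 0 = 1)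
    (huk : ∀ n m, n + 1 = k m → u (n + 1) = δs m * u n)
    (hunk : ∀ n, (∀ m, n + 1 ≠ k m) → u (n + 1) = u n) : u (k 0) = δs 0 := by
  have h := huk (k 0 - 1) 0 (by omega)
  rw [Nat.sub_add_cancel hk0] at h
  rw [h, apply_eq_one_of_lt hk hu0 hunk (by omega), mul_one]

theorem apply_k_succ (hk : StrictMono k)
    (huk : ∀ n m, n + 1 = k m → u (n + 1) = δs m * u n)
    (hunk : ∀ n, (∀ m, n + 1 ≠ k m) → u (n + 1) = u n) (m : ℕ) :
    u (k (m + 1)) = δs (m + 1) * u (k m) := by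
  have hlt : k m < k (m + 1) := hk m.lt_succ_self
  have h := huk (k (m + 1) - 1) (m + 1) (by omega)
  rw [Nat.sub_add_cancel (by omega)] at h
  rw [h, apply_eq_of_le_of_lt_succ hk hunk (m := m) (by omega) (by omega)]

theorem apply_k_eq_prod (hk : StrictMono k) (hk0 : 0 < k 0) (hu0 : u 0 = 1)
    (huk : ∀ n m, n + 1 = k m → u (n + 1) = δs m * u n)
    (hunk : ∀ n, (∀ m, n + 1 ≠ k m) → u (n + 1) = u n) (m : ℕ) :
    u (k m) = ∏ i ∈ range (m + 1), δs i := by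
  induction m with
  | zero => rw [apply_k_zero hk.monotone hk0 hu0 huk hunk, prod_range_one]
  | succ m ih => rw [prod_range_succ, apply_k_succ hk huk hunk, ih, mul_comm]

theorem exists_mul_le_apply_two_mul (hk : StrictMono k) (hk0 : 0 < k 0)
    (hk2 : ∀ m, 2 * k m ≤ k (m + 1)) (hu : Antitone u) (hu0 : u 0 = 1)
    (huk : ∀ n m, n + 1 = k m → u (n + 1) = δs m * u n)
    (hunk : ∀ n, (∀ m, n + 1 ≠ k m) → u (n + 1) = u n) (n : ℕ) :
    ∃ j, δs j * u n ≤ u (2 * n) := by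
  rcases lt_or_ge n (k 0) with hn | hn
  · refine ⟨0, ?_⟩
    rw [apply_eq_one_of_lt hk.monotone hu0 hunk hn, mul_one,
      ← apply_k_zero hk.monotone hk0 hu0 huk hunk]
    exact apply_k_le_of_lt_succ hk hu hunk (by have := hk2 0; omega)
  · obtain ⟨m, hm₁, hm₂⟩ :=
      hk.exists_between_of_tendsto_atTop hk.tendsto_atTop (x := n + 1) (by omega)
    refine ⟨m + 1, ?_⟩
    rw [apply_eq_of_le_of_lt_succ hk hunk (m := m) (by omega) (by omega),
      ← apply_k_succ hk huk hunk]
    exact apply_k_le_of_lt_succ hk hu hunk (by have := hk2 (m + 1); omega)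

end StepSeq

open StepSeq

theorem stmt11_general (δs : ℕ → ℝ) (hδmem : ∀ m, δs m ∈ Ioo (0:ℝ) 1)
    (hsup : (⨆ m, δs m) < 1)
    (k : ℕ → ℕ) (hkmono : StrictMono k) (hk0 : 2 ≤ k 0)
    (hk2 : ∀ m, 2 * k m ≤ k (m+1))
    (u : ℕ → ℝ) (hu0 : u 0 = 1)
    (huk : ∀ n m, n + 1 = k m → u (n+1) = δs m * u n)
    (hunk : ∀ n, (∀ m, n + 1 ≠ k m) → u (n+1) = u n) :
    (∀ m, u (k m) = ∏ i ∈ Finset.range (m+1), δs i) ∧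
    (∀ m n, k m ≤ n → n < k (m+1) → u n = u (k m)) ∧
    (∀ n, u (n+1) ≤ u n) ∧
    Filter.Tendsto u Filter.atTop (nhds 0) ∧
    (∀ n, (⨅ m, δs m) * u n ≤ u (2*n)) := by
  have hδ₀ : ∀ m, 0 ≤ δs m := fun m => (hδmem m).1.le
  have hk0' : 0 < k 0 := by omega
  have hu := antitone (fun m => Ioo_subset_Icc_self (hδmem m)) hu0 huk hunk
  have hu₀ := apply_nonneg hδ₀ hu0 huk hunk
  have hprod := apply_k_eq_prod hkmono hk0' hu0 huk hunk
  have hlim : Tendsto (u ∘ k) atTop (𝓝 0) := by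
    have hbdd : BddAbove (range δs) := ⟨1, forall_mem_range.2 fun m => (hδmem m).2.le⟩
    simpa only [Function.comp_def, hprod] using
      (tendsto_prod_range_zero_of_le hδ₀ (le_ciSup hbdd) hsup).comp (tendsto_add_atTop_nat 1)
  refine ⟨hprod, fun m n => apply_eq_of_le_of_lt_succ hkmono hunk, fun n => hu n.le_succ,
    hu.tendsto_of_tendsto_comp ⟨0, forall_mem_range.2 hu₀⟩ hkmono.tendsto_atTop hlim,
    fun n => ?_⟩
  obtain ⟨j, hj⟩ := exists_mul_le_apply_two_mul hkmono hk0' hk2 hu hu0 huk hunk n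
  have hbdd : BddBelow (range δs) := ⟨0, forall_mem_range.2 hδ₀⟩
  exact (mul_le_mul_of_nonneg_right (ciInf_le hbdd j) (hu₀ n)).trans hj

theorem stmt11 (δs : ℕ → ℝ) (hδmem : ∀ m, δs m ∈ Ioo (0:ℝ) 1)
    (hinf : 0 < ⨅ m, δs m) (hsup : (⨆ m, δs m) < 1)
    (k : ℕ → ℕ) (hkmono : StrictMono k) (hk0 : 2 ≤ k 0)
    (hk2 : ∀ m, 2 * k m ≤ k (m+1))
    (u : ℕ → ℝ) (hu0 : u 0 = 1)
    (huk : ∀ n m, n + 1 = k m → u (n+1) = δs m * u n)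
    (hunk : ∀ n, (∀ m, n + 1 ≠ k m) → u (n+1) = u n) :
    (∀ m, u (k m) = ∏ i ∈ Finset.range (m+1), δs i) ∧
    (∀ m n, k m ≤ n → n < k (m+1) → u n = u (k m)) ∧
    (∀ n, u (n+1) ≤ u n) ∧
    Filter.Tendsto u Filter.atTop (nhds 0) ∧
    (∀ n, (⨅ m, δs m) * u n ≤ u (2*n)) :=
  stmt11_general δs hδmem hsup k hkmono hk0 hk2 u hu0 huk hunk
end

section
/- Let α ≥ 1. Fix the data: a_0 = 0, a_{l+1} = a_l + 1 + l·a_l and I_l = [a_l, a_{l+1}) ∩ ω; a sequence (δ_m)_{m<ω} in (0,1) with 0 < inf_m δ_m ≤ sup_m δ_m < 1; a strictly increasing sequence (k_m)_{m<ω} of natural numbers with k_0 ≥ 2 and k_{m+1} ≥ 2·k_m. For U ⊆ ω define u_U(0) = 1 and, for n > 0, u_U(n) = δ_m·u_U(n−1) if n = k_m for some m ∈ I_l with l ∈ U, and u_U(n) = u_U(n−1) otherwise. Let φ : [0,1] → [0,∞) be continuous and essentially increasing on [0,1] with φ(x) > 0 for x > 0 and φ(x²) ≥ λ·φ(x) for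 some λ > 0 and all x ∈ [0,1]. For each U ⊆ ω let φ_U : [0,1] → [0,∞) be continuous increasing with φ_U(1/2^n) = u_U(n) for every n, and set f_U(x) = x^α·φ(x)·φ_U(x). If U, V ⊆ ω satisfy U ⊆* V and V ⊆* U (i.e., their symmetric difference is finite), then the relations E_{f_U} and E_{f_V} on [0,1]^ω are equal. -/
open Set

/-! Since `U` and `V` differ in only finitely many blocks `I_l`, from some index on the weights
`u_U` and `u_V` drop at the same places by the same factors, so `u_U / u_V` is eventually constant
and `u_U ≤ B u_V`. One step of `u_V` loses at most the factor `δ = inf δ_m > 0`, so the monotone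
interpolations satisfy `φ_U ≤ (B / δ) φ_V` on `(0, 1]`; hence `f_U ≤ C f_V` on `[0, 1]`, and by
comparison `E_{f_V} ⊆ E_{f_U}`. By symmetry the relations are equal. -/

open Filter Topology

lemma exists_forall_lt_mem_iff_of_finite_diff {U V : Set ℕ} (hUV : (U \ V).Finite)
    (hVU : (V \ U).Finite) : ∃ L, ∀ l, L < l → (l ∈ U ↔ l ∈ V) := by
  obtain ⟨L, hL⟩ := (hUV.union hVU).bddAbove
  refine ⟨L, fun l hl => ?_⟩
  have : l ∉ U \ V ∪ V \ U := fun h => (hL h).not_gt hl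
  simp only [mem_union, Set.mem_sdiff] at this
  tauto

section MultiplicativeSteps

variable {u v : ℕ → ℝ} {δ : ℝ}

lemma pos_of_forall_exists_factor (hδ : 0 < δ) (hu0 : 0 < u 0)
    (hu : ∀ n, ∃ c, δ ≤ c ∧ u (n+1) = c * u n) (n : ℕ) : 0 < u n := by
  induction n with
  | zero => exact hu0
  | succ n ih =>
    obtain ⟨c, hc, hcu⟩ := hu n
    rw [hcu]
    exact mul_pos (hδ.trans_le hc) ih

lemma mul_le_succ_of_forall_exists_factor (hu_nonneg : ∀ n, 0 ≤ u n)
    (hu : ∀ n, ∃ c, δ ≤ c ∧ u (n+1) = c * u n) (n : ℕ) : δ * u n ≤ u (n+1) := by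
  obtain ⟨c, hc, hcu⟩ := hu n
  rw [hcu]
  exact mul_le_mul_of_nonneg_right hc (hu_nonneg n)

lemma exists_le_mul_of_eventually_common_factor (hu : ∀ n, 0 < u n) (hv : ∀ n, 0 < v n)
    {N : ℕ} (h : ∀ n, N ≤ n → ∃ c, u (n+1) = c * u n ∧ v (n+1) = c * v n) :
    ∃ B, 0 ≤ B ∧ ∀ n, u n ≤ B * v n := by
  have hconst : ∀ n, N ≤ n → u n / v n = u N / v N := by
    intro n hn
    induction n, hn using Nat.le_induction with
    | base => rfl
    | succ n hn ih =>
      obtain ⟨c, hcu, hcv⟩ := h n hn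
      have hc : c ≠ 0 := by
        rintro rfl
        simpa [hcv] using (hv (n+1)).ne'
      rw [hcu, hcv, mul_div_mul_left _ _ hc, ih]
  have hlim : Tendsto (fun n => u n / v n) atTop (𝓝 (u N / v N)) :=
    tendsto_const_nhds.congr' (eventually_atTop.mpr ⟨N, fun n hn => (hconst n hn).symm⟩)
  obtain ⟨B, hB⟩ := hlim.bddAbove_range
  have hratio (n : ℕ) : u n / v n ≤ B := hB (mem_range_self n)
  exact ⟨B, (div_pos (hu 0) (hv 0)).le.trans (hratio 0),
    fun n => (div_le_iff₀ (hv n)).mp (hratio n)⟩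

end MultiplicativeSteps

lemma le_div_mul_of_monotoneOn_of_pow_half {g g' : ℝ → ℝ} {u v : ℕ → ℝ} {B δ : ℝ}
    (hB : 0 ≤ B) (hδ : 0 < δ) (hg : MonotoneOn g (Icc 0 1)) (hg' : MonotoneOn g' (Icc 0 1))
    (hgu : ∀ n, g ((1/2) ^ n) = u n) (hg'v : ∀ n, g' ((1/2) ^ n) = v n)
    (huv : ∀ n, u n ≤ B * v n) (hv : ∀ n, δ * v n ≤ v (n+1)) :
    ∀ t ∈ Ioc (0:ℝ) 1, g t ≤ B / δ * g' t := by
  intro t ⟨ht0, ht1⟩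
  obtain ⟨n, hlo, hhi⟩ := exists_nat_pow_near_of_lt_one ht0 ht1 one_half_pos one_half_lt_one
  have hpow_mem (j : ℕ) : (1/2 : ℝ) ^ j ∈ Icc (0:ℝ) 1 :=
    ⟨by positivity, pow_le_one₀ (by norm_num) (by norm_num)⟩
  have ht : t ∈ Icc (0:ℝ) 1 := ⟨ht0.le, ht1⟩
  have hBδ : 0 ≤ B / δ := div_nonneg hB hδ.le
  calc g t ≤ g ((1/2) ^ n) := hg ht (hpow_mem n) hhi
    _ = u n := hgu n
    _ ≤ B * v n := huv n
    _ = B / δ * (δ * v n) := by field_simp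
    _ ≤ B / δ * v (n+1) := mul_le_mul_of_nonneg_left (hv n) hBδ
    _ = B / δ * g' ((1/2) ^ (n+1)) := by rw [hg'v]
    _ ≤ B / δ * g' t := mul_le_mul_of_nonneg_left (hg' (hpow_mem _) ht hlo.le) hBδ

lemma EF_of_le_mul {f g : ℝ → ℝ} {C : ℝ} (hf : ∀ t ∈ Icc (0:ℝ) 1, 0 ≤ f t)
    (hfg : ∀ t ∈ Icc (0:ℝ) 1, f t ≤ C * g t) {x y : ℕ → Icc (0:ℝ) 1} (h : EF g x y) :
    EF f x y := by
  have hmem (n : ℕ) : |(x n : ℝ) - y n| ∈ Icc (0:ℝ) 1 :=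
    ⟨abs_nonneg _, abs_sub_le_of_nonneg_of_le (x n).2.1 (x n).2.2 (y n).2.1 (y n).2.2⟩
  exact (h.mul_left C).of_nonneg_of_le (fun n => hf _ (hmem n)) (fun n => hfg _ (hmem n))

-- The factor `t ^ α` vanishes at `0`, so the comparison is only needed on `(0, 1]`.
lemma EF_rpow_mul_mul_of_le_on_Ioc {α C : ℝ} {φ ψ ψ' : ℝ → ℝ} (hα : α ≠ 0)
    (hφ : ∀ t ∈ Icc (0:ℝ) 1, 0 ≤ φ t) (hψ : ∀ t ∈ Icc (0:ℝ) 1, 0 ≤ ψ t)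
    (hψψ' : ∀ t ∈ Ioc (0:ℝ) 1, ψ t ≤ C * ψ' t) {x y : ℕ → Icc (0:ℝ) 1}
    (h : EF (fun t => t ^ α * φ t * ψ' t) x y) : EF (fun t => t ^ α * φ t * ψ t) x y := by
  refine EF_of_le_mul (C := C) (fun t ht => ?_) (fun t ht => ?_) h
  · have := Real.rpow_nonneg ht.1 α
    have := hφ t ht
    have := hψ t ht
    positivity
  · rcases ht.1.eq_or_lt with rfl | ht0
    · simp [Real.zero_rpow hα]
    · calc t ^ α * φ t * ψ t ≤ t ^ α * φ t * (C * ψ' t) :=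
            mul_le_mul_of_nonneg_left (hψψ' t ⟨ht0, ht.2⟩)
              (mul_nonneg (Real.rpow_nonneg ht.1 α) (hφ t ht))
        _ = C * (t ^ α * φ t * ψ' t) := by ring

section DropWeights

variable {a k : ℕ → ℕ} {δs : ℕ → ℝ} {u : Set ℕ → ℕ → ℝ}

lemma exists_factor_of_drop_rule {δ : ℝ}
    (huk : ∀ (U : Set ℕ) (n m l : ℕ), n + 1 = k m → a l ≤ m → m < a (l+1) → l ∈ U →
      u U (n+1) = δs m * u U n)
    (hunk : ∀ (U : Set ℕ) (n : ℕ),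
      (¬ ∃ m l, n + 1 = k m ∧ a l ≤ m ∧ m < a (l+1) ∧ l ∈ U) → u U (n+1) = u U n)
    (hδ : ∀ m, δ ≤ δs m) (hδ1 : δ ≤ 1) (W : Set ℕ) (n : ℕ) :
    ∃ c, δ ≤ c ∧ u W (n+1) = c * u W n := by
  by_cases hdrop : ∃ m l, n + 1 = k m ∧ a l ≤ m ∧ m < a (l+1) ∧ l ∈ W
  · obtain ⟨m, l, hkm, hlo, hhi, hl⟩ := hdrop
    exact ⟨δs m, hδ m, huk W n m l hkm hlo hhi hl⟩
  · exact ⟨1, hδ1, by rw [hunk W n hdrop, one_mul]⟩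

-- The drops coming from the blocks `I_l` with `l ≤ L` all occur before `k (a (L+1))`.
lemma lt_of_drop_index_ge (ha : Monotone a) (hk : Monotone k) {L n m l : ℕ}
    (hn : k (a (L+1)) ≤ n) (hkm : n + 1 = k m) (hm : m < a (l+1)) : L < l := by
  by_contra! hl
  have : k m ≤ k (a (L+1)) := hk (hm.le.trans (ha (by omega)))
  omega

lemma exists_common_factor_of_forall_lt_mem_iff (ha : Monotone a) (hk : Monotone k)
    (huk : ∀ (U : Set ℕ) (n m l : ℕ), n + 1 = k m → a l ≤ m → m < a (l+1) → l ∈ U →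
      u U (n+1) = δs m * u U n)
    (hunk : ∀ (U : Set ℕ) (n : ℕ),
      (¬ ∃ m l, n + 1 = k m ∧ a l ≤ m ∧ m < a (l+1) ∧ l ∈ U) → u U (n+1) = u U n)
    {U V : Set ℕ} {L : ℕ} (hL : ∀ l, L < l → (l ∈ U ↔ l ∈ V)) {n : ℕ}
    (hn : k (a (L+1)) ≤ n) : ∃ c, u U (n+1) = c * u U n ∧ u V (n+1) = c * u V n := by
  have hmem (m l : ℕ) (hkm : n + 1 = k m) (hm : m < a (l+1)) : l ∈ U ↔ l ∈ V :=
    hL l (lt_of_drop_index_ge ha hk hn hkm hm)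
  by_cases hdrop : ∃ m l, n + 1 = k m ∧ a l ≤ m ∧ m < a (l+1) ∧ l ∈ U
  · obtain ⟨m, l, hkm, hlo, hhi, hl⟩ := hdrop
    exact ⟨δs m, huk U n m l hkm hlo hhi hl, huk V n m l hkm hlo hhi ((hmem m l hkm hhi).mp hl)⟩
  · have hdropV : ¬ ∃ m l, n + 1 = k m ∧ a l ≤ m ∧ m < a (l+1) ∧ l ∈ V :=
      fun ⟨m, l, hkm, hlo, hhi, hl⟩ => hdrop ⟨m, l, hkm, hlo, hhi, (hmem m l hkm hhi).mpr hl⟩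
    exact ⟨1, by rw [hunk U n hdrop, one_mul], by rw [hunk V n hdropV, one_mul]⟩

end DropWeights

theorem stmt13_general (α : ℝ) (hα : 1 ≤ α)
    (a : ℕ → ℕ) (haS : ∀ l, a (l+1) = a l + 1 + l * a l)
    (δs : ℕ → ℝ) (hδmem : ∀ m, δs m ∈ Ioo (0:ℝ) 1)
    (hinf : 0 < ⨅ m, δs m)
    (k : ℕ → ℕ) (hkmono : StrictMono k)
    (u : Set ℕ → ℕ → ℝ) (hu0 : ∀ U, u U 0 = 1)
    (huk : ∀ (U : Set ℕ) (n m l : ℕ), n + 1 = k m → a l ≤ m → m < a (l+1) → l ∈ U →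
      u U (n+1) = δs m * u U n)
    (hunk : ∀ (U : Set ℕ) (n : ℕ),
      (¬ ∃ m l, n + 1 = k m ∧ a l ≤ m ∧ m < a (l+1) ∧ l ∈ U) → u U (n+1) = u U n)
    (φ : ℝ → ℝ)
    (hφnn : ∀ t ∈ Icc (0:ℝ) 1, 0 ≤ φ t)
    (φU : Set ℕ → ℝ → ℝ)
    (hφUm : ∀ U, MonotoneOn (φU U) (Icc 0 1))
    (hφUnn : ∀ U, ∀ t ∈ Icc (0:ℝ) 1, 0 ≤ φU U t)
    (hφUval : ∀ U (n : ℕ), φU U ((1/2:ℝ)^n) = u U n)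
    (U V : Set ℕ) (hUV : (U \ V).Finite) (hVU : (V \ U).Finite) :
    EF (fun t => t ^ α * φ t * φU U t) = EF (fun t => t ^ α * φ t * φU V t) := by
  set δ := ⨅ m, δs m
  have hδ : ∀ m, δ ≤ δs m := ciInf_le ⟨0, by rintro _ ⟨m, rfl⟩; exact (hδmem m).1.le⟩
  have hfactor := exists_factor_of_drop_rule huk hunk hδ ((hδ 0).trans (hδmem 0).2.le)
  have hpos (W : Set ℕ) :=
    pos_of_forall_exists_factor hinf (by rw [hu0]; exact one_pos) (hfactor W)
  have ha : Monotone a := monotone_nat_of_le_succ fun l => by rw [haS]; omega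
  obtain ⟨L, hL⟩ := exists_forall_lt_mem_iff_of_finite_diff hUV hVU
  have hEF_imp : ∀ W W' : Set ℕ, (∀ l, L < l → (l ∈ W ↔ l ∈ W')) → ∀ x y,
      EF (fun t => t ^ α * φ t * φU W' t) x y → EF (fun t => t ^ α * φ t * φU W t) x y := by
    intro W W' hWW' x y
    obtain ⟨B, hB, hle⟩ := exists_le_mul_of_eventually_common_factor (hpos W) (hpos W')
      fun n => exists_common_factor_of_forall_lt_mem_iff ha hkmono.monotone huk hunk hWW'
    exact EF_rpow_mul_mul_of_le_on_Ioc (by linarith) hφnn (hφUnn W)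
      (le_div_mul_of_monotoneOn_of_pow_half hB hinf (hφUm W) (hφUm W') (hφUval W) (hφUval W')
        hle (mul_le_succ_of_forall_exists_factor (fun n => (hpos W' n).le) (hfactor W')))
  funext x y
  exact propext ⟨hEF_imp V U (fun l hl => (hL l hl).symm) x y, hEF_imp U V hL x y⟩

theorem stmt13 (α : ℝ) (hα : 1 ≤ α)
    (a : ℕ → ℕ) (ha0 : a 0 = 0) (haS : ∀ l, a (l+1) = a l + 1 + l * a l)
    (δs : ℕ → ℝ) (hδmem : ∀ m, δs m ∈ Ioo (0:ℝ) 1)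
    (hinf : 0 < ⨅ m, δs m) (hsup : (⨆ m, δs m) < 1)
    (k : ℕ → ℕ) (hkmono : StrictMono k) (hk0 : 2 ≤ k 0)
    (hk2 : ∀ m, 2 * k m ≤ k (m+1))
    (u : Set ℕ → ℕ → ℝ) (hu0 : ∀ U, u U 0 = 1)
    (huk : ∀ (U : Set ℕ) (n m l : ℕ), n + 1 = k m → a l ≤ m → m < a (l+1) → l ∈ U →
      u U (n+1) = δs m * u U n)
    (hunk : ∀ (U : Set ℕ) (n : ℕ),
      (¬ ∃ m l, n + 1 = k m ∧ a l ≤ m ∧ m < a (l+1) ∧ l ∈ U) → u U (n+1) = u U n)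
    (φ : ℝ → ℝ) (hφc : ContinuousOn φ (Icc 0 1)) (hφei : EssIncOn φ (Icc 0 1))
    (hφnn : ∀ t ∈ Icc (0:ℝ) 1, 0 ≤ φ t) (hφpos : ∀ t ∈ Ioc (0:ℝ) 1, 0 < φ t)
    (hlam : ∃ lam > (0:ℝ), ∀ t ∈ Icc (0:ℝ) 1, lam * φ t ≤ φ (t^2))
    (φU : Set ℕ → ℝ → ℝ)
    (hφUc : ∀ U, ContinuousOn (φU U) (Icc 0 1))
    (hφUm : ∀ U, MonotoneOn (φU U) (Icc 0 1))
    (hφUnn : ∀ U, ∀ t ∈ Icc (0:ℝ) 1, 0 ≤ φU U t)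
    (hφUval : ∀ U (n : ℕ), φU U ((1/2:ℝ)^n) = u U n)
    (U V : Set ℕ) (hUV : (U \ V).Finite) (hVU : (V \ U).Finite) :
    EF (fun t => t ^ α * φ t * φU U t) = EF (fun t => t ^ α * φ t * φU V t) :=
  stmt13_general α hα a haS δs hδmem hinf k hkmono u hu0 huk hunk φ hφnn φU hφUm hφUnn hφUval U V
    hUV hVU
end
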